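/- arXiv:2011.10544 — 5 statements merged into one kernel-verified Lean document; each statement's English description precedes it below -/
import Mathlib

section
/- For n ≥ 3, the number of proper non-trivial subgroups of the dihedral group D_{2n} equals τ(n) + σ(n) − 2, where τ(n) is the number of positive divisors of n and σ(n) is the sum of positive divisors of n. -/
open DihedralGroup Subgroup

/-- The intersection graph of a group: vertices are the proper non-trivial
subgroups, two distinct subgroups are adjacent iff their intersection is
non-trivial. -/
def interGraph (G : Type*) [Group G] :
    SimpleGraph {H : Subgroup G // H ≠ ⊥ ∧ H ≠ ⊤} where
  Adj H K := H ≠ K ∧ H.1 ⊓ K.1 ≠ ⊥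
  symm := ⟨fun H K h => ⟨h.1.symm, by rw [inf_comm]; exact h.2⟩⟩
  loopless := ⟨fun H h => h.1 rfl⟩

/-- The vertex type of the intersection graph of `DihedralGroup n`. -/
abbrev Vert (n : ℕ) := {H : Subgroup (DihedralGroup n) // H ≠ ⊥ ∧ H ≠ ⊤}

/-- The degree of a vertex in the intersection graph of `DihedralGroup n`. -/
noncomputable def deg (n : ℕ) (v : Vert n) : ℕ :=
  Nat.card ((interGraph (DihedralGroup n)).neighborSet v)

/-- The eccentricity of a vertex in the intersection graph of `DihedralGroup n`. -/
noncomputable def ecc (n : ℕ) (v : Vert n) : ℕ :=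
  sSup (Set.range fun u => (interGraph (DihedralGroup n)).dist v u)

namespace Stmt1Aux

variable {n : ℕ}

lemma mem_zmultiples_of_nsmul_eq_zero [NeZero n] {m d : ℕ} (hmd : n = m * d) (hm : m ≠ 0)
    {x : ZMod n} (hx : m • x = 0) : x ∈ AddSubgroup.zmultiples ((d : ℕ) : ZMod n) := by
  have hv : ((x.val : ℕ) : ZMod n) = x := ZMod.natCast_rightInverse x
  have h0 : ((m * x.val : ℕ) : ZMod n) = 0 := by
    push_cast
    rw [hv, ← nsmul_eq_mul]
    exact hx
  have hdvd : (n : ℕ) ∣ m * x.val := (ZMod.natCast_eq_zero_iff _ _).mp h0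
  have hdvd2 : m * d ∣ m * x.val := by rw [← hmd]; exact hdvd
  have hd : d ∣ x.val := (mul_dvd_mul_iff_left hm).mp hdvd2
  refine AddSubgroup.mem_zmultiples_iff.mpr ⟨(x.val / d : ℕ), ?_⟩
  rw [natCast_zsmul, nsmul_eq_mul, ← Nat.cast_mul, Nat.div_mul_cancel hd, hv]

lemma card_zmultiples_coe [NeZero n] {d : ℕ} (hd : d ∣ n) :
    Nat.card (AddSubgroup.zmultiples ((d : ℕ) : ZMod n)) = n / d := by
  rw [Nat.card_zmultiples, ZMod.addOrderOf_coe d (NeZero.ne n), Nat.gcd_eq_right hd]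

lemma index_zmultiples_coe [NeZero n] {d : ℕ} (hd : d ∣ n) (hd0 : d ≠ 0) :
    (AddSubgroup.zmultiples ((d : ℕ) : ZMod n)).index = d := by
  have h := AddSubgroup.index_mul_card (AddSubgroup.zmultiples ((d : ℕ) : ZMod n))
  rw [card_zmultiples_coe hd, Nat.card_zmod] at h
  have hnd : n / d ≠ 0 := by
    have := Nat.div_pos (Nat.le_of_dvd (Nat.pos_of_ne_zero (NeZero.ne n)) hd)
      (Nat.pos_of_ne_zero hd0)
    omega
  have h2 : (AddSubgroup.zmultiples ((d : ℕ) : ZMod n)).index = n / (n / d) :=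
    (Nat.div_eq_of_eq_mul_left (Nat.pos_of_ne_zero hnd) h.symm).symm
  rw [h2, Nat.div_div_self hd (NeZero.ne n)]

noncomputable def divisorsEquivAddSubgroup [NeZero n] :
    {d : ℕ // d ∈ n.divisors} ≃ AddSubgroup (ZMod n) :=
  Equiv.ofBijective (fun d => AddSubgroup.zmultiples ((d.1 : ℕ) : ZMod n)) (by
    constructor
    · rintro ⟨d, hd⟩ ⟨e, he⟩ h
      rw [Nat.mem_divisors] at hd he
      have hd0 : d ≠ 0 := fun h0 => hd.2 (zero_dvd_iff.mp (h0 ▸ hd.1))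
      have he0 : e ≠ 0 := fun h0 => he.2 (zero_dvd_iff.mp (h0 ▸ he.1))
      have : d = e := by
        rw [← index_zmultiples_coe hd.1 hd0, ← index_zmultiples_coe he.1 he0]
        simp only at h
        rw [h]
      exact Subtype.ext this
    · intro A
      have hA : Nat.card A ∣ n := by
        have := AddSubgroup.card_addSubgroup_dvd_card A
        rwa [Nat.card_zmod] at this
      have hm0 : Nat.card A ≠ 0 := Nat.card_ne_zero.mpr ⟨⟨0, A.zero_mem⟩, inferInstance⟩
      set m := Nat.card A with hm
      refine ⟨⟨n / m, Nat.mem_divisors.mpr ⟨Nat.div_dvd_of_dvd hA, NeZero.ne n⟩⟩, ?_⟩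
      have hmd : n = m * (n / m) := (Nat.mul_div_cancel' hA).symm
      have hle : A ≤ AddSubgroup.zmultiples (((n / m : ℕ) : ZMod n)) := by
        intro x hx
        refine mem_zmultiples_of_nsmul_eq_zero hmd hm0 ?_
        have h1 : m • (⟨x, hx⟩ : A) = 0 := card_nsmul_eq_zero'
        have := congrArg (AddSubgroup.subtype A) h1
        simpa using this
      refine (AddSubgroup.eq_of_le_of_card_ge hle ?_).symm
      rw [card_zmultiples_coe (Nat.div_dvd_of_dvd hA), Nat.div_div_self hA (NeZero.ne n), ← hm])

lemma divisorsEquivAddSubgroup_index [NeZero n] (d : {d : ℕ // d ∈ n.divisors}) :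
    (divisorsEquivAddSubgroup d).index = d.1 := by
  have hd := Nat.mem_divisors.mp d.2
  have hd0 : d.1 ≠ 0 := fun h0 => hd.2 (zero_dvd_iff.mp (h0 ▸ hd.1))
  exact index_zmultiples_coe hd.1 hd0


variable {n : ℕ}

lemma inv_r' (i : ZMod n) : (r i)⁻¹ = r (-i) := rfl
lemma inv_sr' (j : ZMod n) : (sr j : DihedralGroup n)⁻¹ = sr j := rfl

/-- The membership predicate for a subgroup built from a rotation subgroup and an
optional coset of reflections. -/
def memFun (A : AddSubgroup (ZMod n)) (o : Option (ZMod n ⧸ A)) : DihedralGroup n → Prop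
  | .r i => i ∈ A
  | .sr j => o = some (QuotientAddGroup.mk j)

def toSub (A : AddSubgroup (ZMod n)) (o : Option (ZMod n ⧸ A)) : Subgroup (DihedralGroup n) where
  carrier := {x | memFun A o x}
  one_mem' := A.zero_mem
  mul_mem' := by
    rintro (i | i) (j | j) hi hj
    · exact A.add_mem hi hj
    · show o = some (QuotientAddGroup.mk (j - i))
      rw [hj]
      congr 1
      rw [QuotientAddGroup.mk_sub, (QuotientAddGroup.eq_zero_iff i).mpr hi, sub_zero]
    · show o = some (QuotientAddGroup.mk (i + j))
      rw [hi]
      congr 1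
      rw [QuotientAddGroup.mk_add, (QuotientAddGroup.eq_zero_iff j).mpr hj, add_zero]
    · show j - i ∈ A
      have : (QuotientAddGroup.mk i : ZMod n ⧸ A) = QuotientAddGroup.mk j := by
        have := hi.symm.trans hj
        exact Option.some_injective _ this
      rw [sub_eq_neg_add]
      exact (QuotientAddGroup.eq ..).mp this
  inv_mem' := by
    rintro (i | i) hi
    · show -i ∈ A
      exact A.neg_mem hi
    · exact hi

@[simp] lemma r_mem_toSub {A : AddSubgroup (ZMod n)} {o : Option (ZMod n ⧸ A)} {i : ZMod n} :
    r i ∈ toSub A o ↔ i ∈ A := Iff.rfl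

@[simp] lemma sr_mem_toSub {A : AddSubgroup (ZMod n)} {o : Option (ZMod n ⧸ A)} {j : ZMod n} :
    sr j ∈ toSub A o ↔ o = some (QuotientAddGroup.mk j) := Iff.rfl

/-- The rotation part of a subgroup of the dihedral group. -/
def rotA (H : Subgroup (DihedralGroup n)) : AddSubgroup (ZMod n) where
  carrier := {i | r i ∈ H}
  zero_mem' := by show r 0 ∈ H; rw [← one_def]; exact H.one_mem
  add_mem' := fun {a b} ha hb => by
    have := H.mul_mem ha hb; rwa [r_mul_r] at this
  neg_mem' := fun {a} ha => by
    have := H.inv_mem ha; rwa [inv_r'] at this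

@[simp] lemma mem_rotA {H : Subgroup (DihedralGroup n)} {i : ZMod n} :
    i ∈ rotA H ↔ r i ∈ H := Iff.rfl

noncomputable def dihedralSubgroupEquiv :
    (Σ A : AddSubgroup (ZMod n), Option (ZMod n ⧸ A)) ≃ Subgroup (DihedralGroup n) :=
  Equiv.ofBijective (fun X => toSub X.1 X.2) (by
    constructor
    · rintro ⟨A, o⟩ ⟨B, p⟩ h
      simp only at h
      have hmem : ∀ x, x ∈ toSub A o ↔ x ∈ toSub B p := fun x => by rw [h]
      have hAB : A = B := by
        ext i
        exact hmem (r i)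
      subst hAB
      have hop : o = p := by
        rcases o with _ | q <;> rcases p with _ | q'
        · rfl
        · obtain ⟨j, rfl⟩ := QuotientAddGroup.mk_surjective q'
          exact absurd ((hmem (sr j)).mpr rfl) (by simp)
        · obtain ⟨j, rfl⟩ := QuotientAddGroup.mk_surjective q
          exact absurd ((hmem (sr j)).mp rfl) (by simp)
        · obtain ⟨j, rfl⟩ := QuotientAddGroup.mk_surjective q
          have := (hmem (sr j)).mp rfl
          rw [this]
      rw [hop]
    · intro H
      by_cases hex : ∃ j, sr j ∈ H
      · refine ⟨⟨rotA H, some (QuotientAddGroup.mk hex.choose)⟩, ?_⟩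
        have hj0 : sr hex.choose ∈ H := hex.choose_spec
        set j0 := hex.choose
        ext x
        rcases x with i | j
        · exact Iff.rfl
        · show (some (QuotientAddGroup.mk j0) = some (QuotientAddGroup.mk j)) ↔ sr j ∈ H
          rw [Option.some_inj, QuotientAddGroup.eq]
          constructor
          · intro hmem2
            have hr : r (-j0 + j) ∈ H := hmem2
            have := H.mul_mem hj0 hr
            rwa [sr_mul_r, add_neg_cancel_left] at this
          · intro hj
            have := H.mul_mem (H.inv_mem hj0) hj
            rw [inv_sr', sr_mul_sr] at this
            show -j0 + j ∈ rotA H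
            rw [← sub_eq_neg_add]
            exact this
      · refine ⟨⟨rotA H, none⟩, ?_⟩
        ext x
        rcases x with i | j
        · exact Iff.rfl
        · simp only [sr_mem_toSub]
          constructor
          · intro h; exact absurd h (by simp)
          · intro h; exact absurd ⟨j, h⟩ hex)

theorem total (n : ℕ) (hn : 3 ≤ n) :
    Nat.card (Subgroup (DihedralGroup n)) = n.divisors.card + (∑ d ∈ n.divisors, d) := by
  haveI : NeZero n := ⟨by omega⟩
  classical
  haveI : Fintype (AddSubgroup (ZMod n)) := Fintype.ofFinite _
  haveI iq : ∀ A : AddSubgroup (ZMod n), Fintype (ZMod n ⧸ A) := fun A => Fintype.ofFinite _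
  rw [← Nat.card_congr (dihedralSubgroupEquiv (n := n)), Nat.card_eq_fintype_card,
    Fintype.card_sigma]
  have h1 : ∀ A : AddSubgroup (ZMod n), Fintype.card (Option (ZMod n ⧸ A)) = A.index + 1 := by
    intro A
    rw [Fintype.card_option, ← Nat.card_eq_fintype_card]
    rfl
  simp_rw [h1]
  rw [← Fintype.sum_equiv (divisorsEquivAddSubgroup (n := n))
    (fun d => d.1 + 1) (fun A => A.index + 1)
    (fun d => by rw [divisorsEquivAddSubgroup_index d])]
  rw [Finset.sum_coe_sort n.divisors (fun d => d + 1), Finset.sum_add_distrib,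
    Finset.sum_const, smul_eq_mul, mul_one, add_comm]

theorem stmt1' (n : ℕ) (hn : 3 ≤ n) :
    Nat.card {H : Subgroup (DihedralGroup n) // H ≠ ⊥ ∧ H ≠ ⊤}
      = n.divisors.card + (∑ d ∈ n.divisors, d) - 2 := by
  haveI : NeZero n := ⟨by omega⟩
  classical
  have htot := total n hn
  have hbt : (⊥ : Subgroup (DihedralGroup n)) ≠ ⊤ := bot_ne_top
  set S : Set (Subgroup (DihedralGroup n)) := {⊥, ⊤} with hS
  have hcompl : Nat.card {H : Subgroup (DihedralGroup n) // H ≠ ⊥ ∧ H ≠ ⊤} = Sᶜ.ncard := by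
    rw [← Nat.card_coe_set_eq]
    refine Nat.card_congr (Equiv.subtypeEquivRight ?_)
    intro H
    simp [hS, Set.mem_compl_iff, not_or]
  have hadd : S.ncard + Sᶜ.ncard = Nat.card (Subgroup (DihedralGroup n)) :=
    Set.ncard_add_ncard_compl S
  have hS2 : S.ncard = 2 := Set.ncard_pair hbt
  have h2 : 2 ≤ n.divisors.card + (∑ d ∈ n.divisors, d) := by
    have : 0 < n.divisors.card := by
      rw [Finset.card_pos]
      exact ⟨1, Nat.one_mem_divisors.mpr (by omega)⟩
    have : 0 < ∑ d ∈ n.divisors, d :=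
      Finset.sum_pos (fun d hd => Nat.pos_of_mem_divisors hd) ⟨1, Nat.one_mem_divisors.mpr (by omega)⟩
    omega
  omega

end Stmt1Aux

theorem stmt1 (n : ℕ) (hn : 3 ≤ n) :
    Nat.card (Vert n) = n.divisors.card + (∑ d ∈ n.divisors, d) - 2 :=
  Stmt1Aux.stmt1' n hn
end

section
/- For a prime p, in the intersection graph of D_{2p^2}, the degree of a vertex v is: 1 if v is a reflection subgroup ⟨s r^j⟩ of order 2; 2p+1 if v is a dihedral subgroup ⟨r^p, s r^i⟩ of order 2p; and p+1 if v is one of the rotation subgroups ⟨r⟩ or ⟨r^p⟩. -/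
open DihedralGroup Subgroup

namespace IG
open DihedralGroup Subgroup

variable {n : ℕ}

theorem r_inv (a : ZMod n) : (r a)⁻¹ = r (-a) := by
  rw [eq_comm, eq_inv_iff_mul_eq_one, r_mul_r, neg_add_cancel, one_def]

theorem r_pow (a : ZMod n) (m : ℕ) : (r a) ^ m = r (m • a) := by
  induction m with
  | zero => simp
  | succ k ih => rw [pow_succ, ih, r_mul_r, succ_nsmul]

theorem r_zpow (a : ZMod n) (k : ℤ) : (r a) ^ k = r (k • a) := by
  cases k with
  | ofNat m => rw [Int.ofNat_eq_coe, zpow_natCast, r_pow]; norm_num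
  | negSucc m =>
      rw [zpow_negSucc, r_pow, r_inv]
      congr 1
      rw [Int.negSucc_eq]
      simp [add_smul]

theorem sr_not_mem_zpowers_r (j a : ZMod n) : sr j ∉ zpowers (r a) := by
  rintro ⟨k, hk⟩
  dsimp only at hk
  rw [r_zpow] at hk
  exact absurd hk (by simp)

theorem mem_zpowers_sr {x : DihedralGroup n} {j : ZMod n} :
    x ∈ zpowers (sr j) ↔ x = 1 ∨ x = sr j := by
  constructor
  · rintro ⟨k, rfl⟩
    dsimp only
    have h2 : (sr j : DihedralGroup n) ^ (2 : ℤ) = 1 := by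
      rw [zpow_two, sr_mul_sr, sub_self, one_def]
    obtain ⟨m, hm | hm⟩ := Int.even_or_odd' k
    · left; rw [hm, zpow_mul, h2, one_zpow]
    · right; rw [hm, zpow_add, zpow_mul, h2, one_zpow, one_mul, zpow_one]
  · rintro (rfl | rfl)
    · exact Subgroup.one_mem _
    · exact Subgroup.mem_zpowers _

theorem mem_zpowers_r_one [NeZero n] {x : DihedralGroup n} :
    x ∈ zpowers (r (1 : ZMod n)) ↔ ∃ i, x = r i := by
  constructor
  · rintro ⟨k, rfl⟩; exact ⟨k • 1, by dsimp only; rw [r_zpow]⟩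
  · rintro ⟨i, rfl⟩
    exact ⟨(i.val : ℤ), by dsimp only; rw [r_zpow]; congr 1; simp [ZMod.natCast_val, ZMod.cast_id]⟩

end IG
namespace IG
open DihedralGroup Subgroup

variable (p : ℕ)

/-- Reduction mod `p` on `ZMod (p^2)`. -/
def φ : ZMod (p^2) →+* ZMod p := ZMod.castHom (dvd_pow_self p two_ne_zero) (ZMod p)

/-- The reduction hom `DihedralGroup (p^2) →* DihedralGroup p`. -/
def Φ : DihedralGroup (p^2) →* DihedralGroup p where
  toFun x := match x with
    | .r i => .r (φ p i)
    | .sr i => .sr (φ p i)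
  map_one' := by show DihedralGroup.r (φ p 0) = _; rw [map_zero, ← one_def]
  map_mul' := by rintro (a | a) (b | b) <;> simp [map_add, map_sub]

@[simp] theorem Φ_r (i : ZMod (p^2)) : Φ p (DihedralGroup.r i) = DihedralGroup.r (φ p i) := rfl
@[simp] theorem Φ_sr (i : ZMod (p^2)) : Φ p (DihedralGroup.sr i) = DihedralGroup.sr (φ p i) := rfl

variable [hpf : Fact p.Prime]

theorem phi_p : φ p ((p : ℕ) : ZMod (p^2)) = 0 := by
  simp [φ]

theorem phi_zero_iff_dvd (i : ZMod (p^2)) : φ p i = 0 ↔ p ∣ i.val := by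
  have h1 : φ p i = ((i.val : ℕ) : ZMod p) := by
    rw [φ, ZMod.castHom_apply, ← ZMod.natCast_val]
  rw [h1, ZMod.natCast_eq_zero_iff]

theorem phi_zero_iff (i : ZMod (p^2)) :
    φ p i = 0 ↔ i ∈ AddSubgroup.zmultiples ((p : ℕ) : ZMod (p^2)) := by
  constructor
  · intro h
    obtain ⟨c, hc⟩ := (phi_zero_iff_dvd p i).mp h
    refine AddSubgroup.mem_zmultiples_iff.mpr ⟨(c : ℤ), ?_⟩
    have : i = ((i.val : ℕ) : ZMod (p^2)) := (ZMod.natCast_rightInverse i).symm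
    rw [this, hc, zsmul_eq_mul]
    push_cast
    ring
  · rintro ⟨k, rfl⟩
    rw [map_zsmul, phi_p, smul_zero]

theorem mem_Zp (i : ZMod (p^2)) :
    DihedralGroup.r i ∈ zpowers (DihedralGroup.r ((p : ℕ) : ZMod (p^2))) ↔ φ p i = 0 := by
  rw [phi_zero_iff]
  constructor
  · rintro ⟨k, hk⟩
    dsimp only at hk
    rw [r_zpow] at hk
    exact AddSubgroup.mem_zmultiples_iff.mpr ⟨k, by simpa using hk⟩
  · intro h
    obtain ⟨k, hk⟩ := AddSubgroup.mem_zmultiples_iff.mp h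
    exact ⟨k, by dsimp only; rw [r_zpow, hk]⟩

/-- Auxiliary: in `ZMod n`, additive subgroups are closed under ring multiplication. -/
theorem zmod_mul_mem {n : ℕ} [NeZero n] {A : AddSubgroup (ZMod n)} (z : ZMod n) {i : ZMod n}
    (hi : i ∈ A) : z * i ∈ A := by
  have h := A.nsmul_mem hi z.val
  rwa [nsmul_eq_mul, ZMod.natCast_rightInverse z] at h

theorem addSubgroup_classify (A : AddSubgroup (ZMod (p^2))) :
    A = ⊥ ∨ A = AddSubgroup.zmultiples ((p : ℕ) : ZMod (p^2)) ∨ A = ⊤ := by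
  have hp := hpf.out
  by_cases hA : ∀ i ∈ A, φ p i = 0
  · by_cases hB : ∀ i ∈ A, i = 0
    · exact Or.inl ((AddSubgroup.eq_bot_iff_forall A).mpr hB)
    · refine Or.inr (Or.inl ?_)
      push_neg at hB
      obtain ⟨i, hiA, hi0⟩ := hB
      obtain ⟨m, hm⟩ := (phi_zero_iff_dvd p i).mp (hA i hiA)
      have hmp : m < p := by
        have h1 : i.val < p^2 := i.val_lt
        rw [hm, pow_two] at h1
        exact lt_of_mul_lt_mul_left h1 (Nat.zero_le p)
      have hm0 : m ≠ 0 := by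
        rintro rfl
        exact hi0 (i.val_eq_zero.mp (by omega))
      have hcop : Nat.Coprime m (p^2) :=
        Nat.Coprime.pow_right 2 (Nat.coprime_comm.mp
          (hp.coprime_iff_not_dvd.mpr (Nat.not_dvd_of_pos_of_lt (Nat.pos_of_ne_zero hm0) hmp)))
      set u : (ZMod (p^2))ˣ := ZMod.unitOfCoprime m hcop with hu
      have hiu : i = ((p : ℕ) : ZMod (p^2)) * u := by
        have h2 : ((u : ZMod (p^2))) = ((m : ℕ) : ZMod (p^2)) := ZMod.coe_unitOfCoprime m hcop
        rw [h2, ← Nat.cast_mul, ← hm, ZMod.natCast_rightInverse i]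
      have hpA : ((p : ℕ) : ZMod (p^2)) ∈ A := by
        have h3 : ((u⁻¹ : (ZMod (p^2))ˣ) : ZMod (p^2)) * i ∈ A := zmod_mul_mem _ hiA
        rwa [hiu, mul_comm ((p : ℕ) : ZMod (p^2)), ← mul_assoc, Units.inv_mul, one_mul] at h3
      apply le_antisymm
      · intro x hx
        exact (phi_zero_iff p x).mp (hA x hx)
      · exact AddSubgroup.zmultiples_le.mpr hpA
  · refine Or.inr (Or.inr ?_)
    push_neg at hA
    obtain ⟨i, hiA, hi0⟩ := hA
    have hnd : ¬ p ∣ i.val := fun h => hi0 ((phi_zero_iff_dvd p i).mpr h)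
    have hcop : Nat.Coprime i.val (p^2) :=
      Nat.Coprime.pow_right 2 (Nat.coprime_comm.mp (hp.coprime_iff_not_dvd.mpr hnd))
    set u : (ZMod (p^2))ˣ := ZMod.unitOfCoprime i.val hcop with hu
    have hui : (u : ZMod (p^2)) = i := by
      rw [hu, ZMod.coe_unitOfCoprime, ZMod.natCast_rightInverse i]
    rw [AddSubgroup.eq_top_iff']
    intro y
    have h3 : (y * ((u⁻¹ : (ZMod (p^2))ˣ) : ZMod (p^2))) * i ∈ A := zmod_mul_mem _ hiA
    rwa [← hui, mul_assoc, Units.inv_mul, mul_one] at h3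

end IG
namespace IG
open DihedralGroup Subgroup

variable (p : ℕ)

/-- The dihedral subgroup of order `2p` with reflection class `c`. -/
def E (c : ZMod p) : Subgroup (DihedralGroup (p^2)) :=
  Subgroup.comap (Φ p) (zpowers (DihedralGroup.sr c))

theorem mem_E (c : ZMod p) (x : DihedralGroup (p^2)) :
    x ∈ E p c ↔ (∃ a, x = DihedralGroup.r a ∧ φ p a = 0) ∨
      (∃ a, x = DihedralGroup.sr a ∧ φ p a = c) := by
  cases x with
  | r a => simp [E, Subgroup.mem_comap, mem_zpowers_sr, one_def, -r_zero]
  | sr a => simp [E, Subgroup.mem_comap, mem_zpowers_sr, one_def, -r_zero]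

variable [hpf : Fact p.Prime]

theorem D_eq_E (i : ZMod (p^2)) :
    Subgroup.closure {DihedralGroup.r ((p : ℕ) : ZMod (p^2)), DihedralGroup.sr i}
      = E p (φ p i) := by
  apply le_antisymm
  · rw [Subgroup.closure_le]
    rintro x (rfl | rfl)
    · exact (mem_E p _ _).mpr (Or.inl ⟨_, rfl, phi_p p⟩)
    · exact (mem_E p _ _).mpr (Or.inr ⟨i, rfl, rfl⟩)
  · intro x hx
    rw [mem_E] at hx
    have hrp : DihedralGroup.r ((p : ℕ) : ZMod (p^2)) ∈
        Subgroup.closure {DihedralGroup.r ((p : ℕ) : ZMod (p^2)), DihedralGroup.sr i} :=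
      Subgroup.subset_closure (by simp)
    have hsi : DihedralGroup.sr i ∈
        Subgroup.closure {DihedralGroup.r ((p : ℕ) : ZMod (p^2)), DihedralGroup.sr i} :=
      Subgroup.subset_closure (by simp)
    have hr0 : ∀ a : ZMod (p^2), φ p a = 0 → DihedralGroup.r a ∈
        Subgroup.closure {DihedralGroup.r ((p : ℕ) : ZMod (p^2)), DihedralGroup.sr i} := by
      intro a ha
      exact Subgroup.zpowers_le.mpr hrp ((mem_Zp p a).mpr ha)
    rcases hx with ⟨a, rfl, ha⟩ | ⟨a, rfl, ha⟩
    · exact hr0 a ha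
    · have key : DihedralGroup.r (i - a) * DihedralGroup.sr i = DihedralGroup.sr a := by
        rw [r_mul_sr]; congr 1; ring
      rw [← key]
      exact Subgroup.mul_mem _ (hr0 _ (by rw [map_sub, ha, sub_self])) hsi

/-- The additive subgroup of rotation indices of a subgroup. -/
def rotA (H : Subgroup (DihedralGroup (p^2))) : AddSubgroup (ZMod (p^2)) where
  carrier := {i | DihedralGroup.r i ∈ H}
  zero_mem' := by show DihedralGroup.r 0 ∈ H; rw [← one_def]; exact H.one_mem
  add_mem' := by
    intro a b ha hb
    have := H.mul_mem ha hb
    rwa [r_mul_r] at this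
  neg_mem' := by
    intro a ha
    have := H.inv_mem ha
    rwa [r_inv] at this

omit hpf in
@[simp] theorem mem_rotA (H : Subgroup (DihedralGroup (p^2))) (i : ZMod (p^2)) :
    i ∈ rotA p H ↔ DihedralGroup.r i ∈ H := Iff.rfl

theorem subgroup_classify (H : Subgroup (DihedralGroup (p^2))) :
    H = ⊥ ∨ H = ⊤ ∨ H = zpowers (DihedralGroup.r (1 : ZMod (p^2))) ∨
      H = zpowers (DihedralGroup.r ((p : ℕ) : ZMod (p^2))) ∨
      (∃ j, H = zpowers (DihedralGroup.sr j)) ∨ (∃ c, H = E p c) := by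
  by_cases hs : ∃ j, DihedralGroup.sr j ∈ H
  · obtain ⟨j, hj⟩ := hs
    rcases addSubgroup_classify p (rotA p H) with hA | hA | hA
    · -- H = zpowers (sr j)
      refine Or.inr (Or.inr (Or.inr (Or.inr (Or.inl ⟨j, ?_⟩))))
      apply le_antisymm
      · intro x hx
        rw [mem_zpowers_sr]
        cases x with
        | r a =>
            have : a ∈ rotA p H := hx
            rw [hA, AddSubgroup.mem_bot] at this
            left; rw [this, one_def]
        | sr a =>
            have h2 := H.mul_mem hx hj
            rw [sr_mul_sr] at h2
            have : j - a ∈ rotA p H := h2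
            rw [hA, AddSubgroup.mem_bot, sub_eq_zero] at this
            right; rw [this]
      · exact Subgroup.zpowers_le.mpr hj
    · -- H = E p (φ p j)
      refine Or.inr (Or.inr (Or.inr (Or.inr (Or.inr ⟨φ p j, ?_⟩))))
      ext x
      rw [mem_E]
      cases x with
      | r a =>
          simp only [reduceCtorEq, false_and, exists_false, or_false, DihedralGroup.r.injEq,
            exists_eq_left']
          constructor
          · intro hx
            have : a ∈ rotA p H := hx
            rw [hA] at this
            exact (phi_zero_iff p a).mpr this
          · intro hx
            have : a ∈ rotA p H := by rw [hA]; exact (phi_zero_iff p a).mp hx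
            exact this
      | sr a =>
          simp only [reduceCtorEq, false_and, exists_false, false_or, DihedralGroup.sr.injEq,
            exists_eq_left']
          constructor
          · intro hx
            have h2 := H.mul_mem hx hj
            rw [sr_mul_sr] at h2
            have h3 : j - a ∈ rotA p H := h2
            rw [hA] at h3
            have := (phi_zero_iff p (j - a)).mpr h3
            rw [map_sub, sub_eq_zero] at this
            exact this.symm
          · intro hx
            have h3 : j - a ∈ rotA p H := by
              rw [hA]
              exact (phi_zero_iff p (j - a)).mp (by rw [map_sub, hx, sub_self])
            have h4 := H.mul_mem (mem_rotA p H _ |>.mp h3) hj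
            rw [r_mul_sr] at h4
            convert h4 using 2
            ring
    · -- H = ⊤
      refine Or.inr (Or.inl ?_)
      rw [Subgroup.eq_top_iff']
      intro x
      cases x with
      | r a => exact (mem_rotA p H a).mp (by rw [hA]; trivial)
      | sr a =>
          have h3 : j - a ∈ rotA p H := by rw [hA]; trivial
          have h4 := H.mul_mem (mem_rotA p H _ |>.mp h3) hj
          rw [r_mul_sr] at h4
          convert h4 using 2
          ring
  · push_neg at hs
    rcases addSubgroup_classify p (rotA p H) with hA | hA | hA
    · refine Or.inl ?_
      rw [Subgroup.eq_bot_iff_forall]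
      intro x hx
      cases x with
      | r a =>
          have : a ∈ rotA p H := hx
          rw [hA, AddSubgroup.mem_bot] at this
          rw [this, one_def]
      | sr a => exact absurd hx (hs a)
    · refine Or.inr (Or.inr (Or.inr (Or.inl ?_)))
      ext x
      cases x with
      | r a =>
          rw [mem_Zp, phi_zero_iff, ← hA]
          exact Iff.rfl
      | sr a =>
          simp only [sr_not_mem_zpowers_r, iff_false]
          exact hs a
    · refine Or.inr (Or.inr (Or.inl ?_))
      ext x
      rw [mem_zpowers_r_one]
      cases x with
      | r a =>
          simp only [DihedralGroup.r.injEq, exists_eq', iff_true]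
          exact (mem_rotA p H a).mp (by rw [hA]; trivial)
      | sr a =>
          simp only [reduceCtorEq, exists_false, iff_false]
          exact hs a

end IG
namespace IG
set_option linter.unusedSectionVars false
open DihedralGroup Subgroup

theorem inf_ne_bot {G : Type*} [Group G] {H K : Subgroup G} {x : G} (hx : x ≠ 1)
    (h1 : x ∈ H) (h2 : x ∈ K) : H ⊓ K ≠ ⊥ := by
  intro h
  exact hx ((Subgroup.eq_bot_iff_forall _).mp h x ⟨h1, h2⟩)

theorem exists_of_inf_ne_bot {G : Type*} [Group G] {H K : Subgroup G} (h : H ⊓ K ≠ ⊥) :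
    ∃ x, x ≠ 1 ∧ x ∈ H ∧ x ∈ K := by
  by_contra hc
  push_neg at hc
  refine h ((Subgroup.eq_bot_iff_forall _).mpr fun x hx => ?_)
  obtain ⟨h1, h2⟩ := Subgroup.mem_inf.mp hx
  by_contra hne
  exact hc x hne h1 h2

variable (p : ℕ) [hpf : Fact p.Prime]

theorem p_cast_ne_zero : ((p : ℕ) : ZMod (p^2)) ≠ 0 := by
  rw [Ne, ZMod.natCast_eq_zero_iff]
  intro h
  have h1 := Nat.le_of_dvd (hpf.out.pos) h
  have h2 := hpf.out.one_lt
  nlinarith [sq_nonneg p]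

theorem one_cast_ne_zero : (1 : ZMod (p^2)) ≠ 0 := by
  have : ((1 : ℕ) : ZMod (p^2)) ≠ 0 := by
    rw [Ne, ZMod.natCast_eq_zero_iff]
    intro h
    have := Nat.le_of_dvd one_pos h
    have h2 := hpf.out.one_lt
    nlinarith
  simpa using this

theorem phi_one_ne_zero : φ p (1 : ZMod (p^2)) ≠ 0 := by
  haveI : Fact (1 < p) := ⟨hpf.out.one_lt⟩
  rw [map_one]
  exact one_ne_zero

/-- Lift of `c : ZMod p` to `ZMod (p^2)`. -/
def lift (c : ZMod p) : ZMod (p^2) := ((c.val : ℕ) : ZMod (p^2))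

theorem phi_lift (c : ZMod p) : φ p (lift p c) = c := by
  haveI : NeZero p := ⟨hpf.out.ne_zero⟩
  rw [lift, map_natCast, ZMod.natCast_rightInverse c]

theorem sr_mem_E {a : ZMod (p^2)} {c : ZMod p} :
    DihedralGroup.sr a ∈ E p c ↔ φ p a = c := by
  rw [mem_E]; simp

theorem r_mem_E {a : ZMod (p^2)} {c : ZMod p} :
    DihedralGroup.r a ∈ E p c ↔ φ p a = 0 := by
  rw [mem_E]; simp

theorem rp_mem_E (c : ZMod p) : DihedralGroup.r ((p : ℕ) : ZMod (p^2)) ∈ E p c :=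
  (r_mem_E p).mpr (phi_p p)

theorem rp_ne_one : DihedralGroup.r ((p : ℕ) : ZMod (p^2)) ≠ 1 := by
  rw [one_def]; simp [p_cast_ne_zero p, -r_zero]

theorem sr_ne_one (j : ZMod (p^2)) : DihedralGroup.sr j ≠ 1 := by
  rw [one_def]; simp [-r_zero]

theorem r_one_ne_one : DihedralGroup.r (1 : ZMod (p^2)) ≠ 1 := by
  rw [one_def]; simp [one_cast_ne_zero p, -r_zero]

-- names for the four families
theorem S_ne_bot (j : ZMod (p^2)) : zpowers (DihedralGroup.sr j) ≠ ⊥ := fun h =>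
  sr_ne_one p j ((Subgroup.eq_bot_iff_forall _).mp h _ (Subgroup.mem_zpowers _))

theorem r_one_not_mem_S (j : ZMod (p^2)) :
    DihedralGroup.r (1 : ZMod (p^2)) ∉ zpowers (DihedralGroup.sr j) := by
  rw [mem_zpowers_sr]
  rintro (h | h)
  · exact r_one_ne_one p h
  · simp at h

theorem rp_not_mem_S (j : ZMod (p^2)) :
    DihedralGroup.r ((p : ℕ) : ZMod (p^2)) ∉ zpowers (DihedralGroup.sr j) := by
  rw [mem_zpowers_sr]
  rintro (h | h)
  · exact rp_ne_one p h
  · simp at h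

theorem S_ne_top (j : ZMod (p^2)) : zpowers (DihedralGroup.sr j) ≠ (⊤ : Subgroup _) := fun h =>
  r_one_not_mem_S p j (h ▸ Subgroup.mem_top _)

theorem Zr_ne_bot : zpowers (DihedralGroup.r (1 : ZMod (p^2))) ≠ ⊥ := fun h =>
  r_one_ne_one p ((Subgroup.eq_bot_iff_forall _).mp h _ (Subgroup.mem_zpowers _))

theorem Zp_ne_bot : zpowers (DihedralGroup.r ((p : ℕ) : ZMod (p^2))) ≠ ⊥ := fun h =>
  rp_ne_one p ((Subgroup.eq_bot_iff_forall _).mp h _ (Subgroup.mem_zpowers _))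

theorem Zr_ne_top : zpowers (DihedralGroup.r (1 : ZMod (p^2))) ≠ (⊤ : Subgroup _) := fun h =>
  sr_not_mem_zpowers_r 0 _ (h ▸ Subgroup.mem_top _)

theorem Zp_ne_top : zpowers (DihedralGroup.r ((p : ℕ) : ZMod (p^2))) ≠ (⊤ : Subgroup _) := fun h =>
  sr_not_mem_zpowers_r 0 _ (h ▸ Subgroup.mem_top _)

theorem E_ne_bot (c : ZMod p) : E p c ≠ ⊥ := fun h =>
  rp_ne_one p ((Subgroup.eq_bot_iff_forall _).mp h _ (rp_mem_E p c))

theorem r_one_not_mem_E (c : ZMod p) : DihedralGroup.r (1 : ZMod (p^2)) ∉ E p c := by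
  rw [r_mem_E]
  exact phi_one_ne_zero p

theorem E_ne_top (c : ZMod p) : E p c ≠ (⊤ : Subgroup _) := fun h =>
  r_one_not_mem_E p c (h ▸ Subgroup.mem_top _)

theorem r_one_not_mem_Zp : DihedralGroup.r (1 : ZMod (p^2)) ∉
    zpowers (DihedralGroup.r ((p : ℕ) : ZMod (p^2))) := by
  rw [mem_Zp]
  exact phi_one_ne_zero p

theorem Zr_ne_Zp : zpowers (DihedralGroup.r (1 : ZMod (p^2)))
    ≠ zpowers (DihedralGroup.r ((p : ℕ) : ZMod (p^2))) := fun h =>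
  r_one_not_mem_Zp p (h ▸ Subgroup.mem_zpowers _)

theorem S_ne_Zr (j : ZMod (p^2)) :
    zpowers (DihedralGroup.sr j) ≠ zpowers (DihedralGroup.r (1 : ZMod (p^2))) := fun h =>
  sr_not_mem_zpowers_r j _ (h ▸ Subgroup.mem_zpowers _)

theorem S_ne_Zp (j : ZMod (p^2)) :
    zpowers (DihedralGroup.sr j) ≠ zpowers (DihedralGroup.r ((p : ℕ) : ZMod (p^2))) := fun h =>
  sr_not_mem_zpowers_r j _ (h ▸ Subgroup.mem_zpowers _)

theorem S_ne_E (j : ZMod (p^2)) (c : ZMod p) : zpowers (DihedralGroup.sr j) ≠ E p c := fun h =>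
  rp_not_mem_S p j (h ▸ rp_mem_E p c)

theorem E_ne_Zr (c : ZMod p) : E p c ≠ zpowers (DihedralGroup.r (1 : ZMod (p^2))) := fun h =>
  sr_not_mem_zpowers_r (lift p c) _ (h ▸ (sr_mem_E p).mpr (phi_lift p c))

theorem E_ne_Zp (c : ZMod p) : E p c ≠ zpowers (DihedralGroup.r ((p : ℕ) : ZMod (p^2))) := fun h =>
  sr_not_mem_zpowers_r (lift p c) _ (h ▸ (sr_mem_E p).mpr (phi_lift p c))

theorem S_inj {j j' : ZMod (p^2)}
    (h : zpowers (DihedralGroup.sr j) = zpowers (DihedralGroup.sr j')) : j = j' := by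
  have := h ▸ Subgroup.mem_zpowers (DihedralGroup.sr j)
  rw [mem_zpowers_sr] at this
  rcases this with h1 | h1
  · exact absurd h1 (sr_ne_one p j)
  · simpa using h1

theorem E_inj {c c' : ZMod p} (h : E p c = E p c') : c = c' := by
  have := h ▸ (sr_mem_E p).mpr (phi_lift p c)
  rw [sr_mem_E, phi_lift] at this
  exact this

end IG
namespace IG
set_option linter.unusedSectionVars false
open DihedralGroup Subgroup

variable (p : ℕ) [hpf : Fact p.Prime]

/-- vertex for `⟨r⟩` -/
def vZr : Vert (p^2) :=
  ⟨zpowers (DihedralGroup.r (1 : ZMod (p^2))), Zr_ne_bot p, Zr_ne_top p⟩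

/-- vertex for `⟨r^p⟩` -/
def vZp : Vert (p^2) :=
  ⟨zpowers (DihedralGroup.r ((p : ℕ) : ZMod (p^2))), Zp_ne_bot p, Zp_ne_top p⟩

/-- vertex for `⟨sr^j⟩` -/
def vS (j : ZMod (p^2)) : Vert (p^2) :=
  ⟨zpowers (DihedralGroup.sr j), S_ne_bot p j, S_ne_top p j⟩

/-- vertex for the dihedral subgroup of class `c` -/
def vE (c : ZMod p) : Vert (p^2) := ⟨E p c, E_ne_bot p c, E_ne_top p c⟩

theorem mem_nbhd (v u : Vert (p^2)) :
    u ∈ (interGraph (DihedralGroup (p^2))).neighborSet v ↔ v ≠ u ∧ v.1 ⊓ u.1 ≠ ⊥ :=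
  Iff.rfl

theorem deg_S (v : Vert (p^2)) (j : ZMod (p^2))
    (hv : v.1 = zpowers (DihedralGroup.sr j)) : deg (p^2) v = 1 := by
  have hset : (interGraph (DihedralGroup (p^2))).neighborSet v = {vE p (φ p j)} := by
    ext u
    rw [mem_nbhd, Set.mem_singleton_iff]
    constructor
    · rintro ⟨hne, hinf⟩
      obtain ⟨x, hx1, hxH, hxK⟩ := exists_of_inf_ne_bot hinf
      rw [hv, mem_zpowers_sr] at hxH
      rcases hxH with rfl | rfl
      · exact absurd rfl hx1
      · rcases subgroup_classify p u.1 with h | h | h | h | ⟨j', h⟩ | ⟨c, h⟩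
        · exact absurd h u.2.1
        · exact absurd h u.2.2
        · rw [h] at hxK; exact absurd hxK (sr_not_mem_zpowers_r _ _)
        · rw [h] at hxK; exact absurd hxK (sr_not_mem_zpowers_r _ _)
        · rw [h, mem_zpowers_sr] at hxK
          rcases hxK with h1 | h1
          · exact absurd h1 (sr_ne_one p j)
          · have hjj : j = j' := by simpa using h1
            exact absurd (Subtype.ext (by rw [h, hv, hjj]) : v = u) hne
        · rw [h, sr_mem_E] at hxK
          exact Subtype.ext (by rw [h, hxK]; rfl)
    · rintro rfl
      refine ⟨fun h => S_ne_E p j (φ p j) ?_, ?_⟩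
      · rw [← hv, h]; rfl
      · rw [hv]
        exact inf_ne_bot (sr_ne_one p j) (Subgroup.mem_zpowers _) ((sr_mem_E p).mpr rfl)
  rw [deg, hset, Nat.card_coe_set_eq, Set.ncard_singleton]

theorem card_option_zmod : Nat.card (Option (ZMod p)) = p + 1 := by
  haveI : NeZero p := ⟨hpf.out.ne_zero⟩
  rw [Nat.card_eq_fintype_card, Fintype.card_option, ZMod.card]

theorem deg_Zr (v : Vert (p^2))
    (hv : v.1 = zpowers (DihedralGroup.r (1 : ZMod (p^2)))) : deg (p^2) v = p + 1 := by
  set f : Option (ZMod p) → Vert (p^2) := fun o => o.elim (vZp p) (vE p) with hf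
  have hinj : Function.Injective f := by
    rintro (_ | c) (_ | c') h <;> simp only [hf, Option.elim] at h
    · rfl
    · exact absurd (congrArg Subtype.val h) (E_ne_Zp p c').symm
    · exact absurd (congrArg Subtype.val h) (E_ne_Zp p c)
    · rw [E_inj p (congrArg Subtype.val h : E p c = E p c')]
  have hset : (interGraph (DihedralGroup (p^2))).neighborSet v = Set.range f := by
    ext u
    rw [mem_nbhd, Set.mem_range]
    constructor
    · rintro ⟨hne, hinf⟩
      obtain ⟨x, hx1, hxH, hxK⟩ := exists_of_inf_ne_bot hinf
      rw [hv, mem_zpowers_r_one] at hxH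
      obtain ⟨a, rfl⟩ := hxH
      rcases subgroup_classify p u.1 with h | h | h | h | ⟨j', h⟩ | ⟨c, h⟩
      · exact absurd h u.2.1
      · exact absurd h u.2.2
      · exact absurd (Subtype.ext (hv.trans h.symm) : v = u) hne
      · exact ⟨none, (Subtype.ext h.symm : f none = u)⟩
      · rw [h, mem_zpowers_sr] at hxK
        rcases hxK with h1 | h1
        · exact absurd h1 hx1
        · simp at h1
      · exact ⟨some c, (Subtype.ext h.symm : f (some c) = u)⟩
    · rintro ⟨o, rfl⟩
      have hrp1 : DihedralGroup.r ((p : ℕ) : ZMod (p^2)) ∈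
          zpowers (DihedralGroup.r (1 : ZMod (p^2))) := mem_zpowers_r_one.mpr ⟨_, rfl⟩
      cases o with
      | none =>
          refine ⟨fun h => Zr_ne_Zp p ?_, ?_⟩
          · rw [← hv, h]; rfl
          · rw [hv]
            exact inf_ne_bot (rp_ne_one p) hrp1 ((mem_Zp p _).mpr (phi_p p))
      | some c =>
          refine ⟨fun h => (E_ne_Zr p c).symm ?_, ?_⟩
          · rw [← hv, h]; rfl
          · rw [hv]
            exact inf_ne_bot (rp_ne_one p) hrp1 (rp_mem_E p c)
  rw [deg, hset, Nat.card_range_of_injective hinj, card_option_zmod]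

theorem deg_Zp (v : Vert (p^2))
    (hv : v.1 = zpowers (DihedralGroup.r ((p : ℕ) : ZMod (p^2)))) : deg (p^2) v = p + 1 := by
  set f : Option (ZMod p) → Vert (p^2) := fun o => o.elim (vZr p) (vE p) with hf
  have hinj : Function.Injective f := by
    rintro (_ | c) (_ | c') h <;> simp only [hf, Option.elim] at h
    · rfl
    · exact absurd (congrArg Subtype.val h) (E_ne_Zr p c').symm
    · exact absurd (congrArg Subtype.val h) (E_ne_Zr p c)
    · rw [E_inj p (congrArg Subtype.val h : E p c = E p c')]
  have hset : (interGraph (DihedralGroup (p^2))).neighborSet v = Set.range f := by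
    ext u
    rw [mem_nbhd, Set.mem_range]
    constructor
    · rintro ⟨hne, hinf⟩
      obtain ⟨x, hx1, hxH, hxK⟩ := exists_of_inf_ne_bot hinf
      rw [hv] at hxH
      have hxr : ∃ a, x = DihedralGroup.r a := by
        cases x with
        | r a => exact ⟨a, rfl⟩
        | sr a => exact absurd hxH (sr_not_mem_zpowers_r _ _)
      obtain ⟨a, rfl⟩ := hxr
      rcases subgroup_classify p u.1 with h | h | h | h | ⟨j', h⟩ | ⟨c, h⟩
      · exact absurd h u.2.1
      · exact absurd h u.2.2
      · exact ⟨none, (Subtype.ext h.symm : f none = u)⟩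
      · exact absurd (Subtype.ext (hv.trans h.symm) : v = u) hne
      · rw [h, mem_zpowers_sr] at hxK
        rcases hxK with h1 | h1
        · exact absurd h1 hx1
        · simp at h1
      · exact ⟨some c, (Subtype.ext h.symm : f (some c) = u)⟩
    · rintro ⟨o, rfl⟩
      have hrpp : DihedralGroup.r ((p : ℕ) : ZMod (p^2)) ∈
          zpowers (DihedralGroup.r ((p : ℕ) : ZMod (p^2))) := Subgroup.mem_zpowers _
      cases o with
      | none =>
          refine ⟨fun h => Zr_ne_Zp p ?_, ?_⟩
          · rw [← hv, h]; rfl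
          · rw [hv]
            exact inf_ne_bot (rp_ne_one p) hrpp (mem_zpowers_r_one.mpr ⟨_, rfl⟩)
      | some c =>
          refine ⟨fun h => (E_ne_Zp p c).symm ?_, ?_⟩
          · rw [← hv, h]; rfl
          · rw [hv]
            exact inf_ne_bot (rp_ne_one p) hrpp (rp_mem_E p c)
  rw [deg, hset, Nat.card_range_of_injective hinj, card_option_zmod]

theorem card_fiber (c₀ : ZMod p) : Nat.card {j : ZMod (p^2) // φ p j = c₀} = p := by
  have e1 : {j : ZMod (p^2) // φ p j = c₀} ≃ {j : ZMod (p^2) // φ p j = 0} :=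
    (Equiv.subRight (lift p c₀)).subtypeEquiv (fun j => by
      simp only [Equiv.subRight_apply, map_sub, phi_lift, sub_eq_zero])
  have e2 : {j : ZMod (p^2) // φ p j = 0} ≃
      AddSubgroup.zmultiples ((p : ℕ) : ZMod (p^2)) :=
    Equiv.subtypeEquivRight (fun j => phi_zero_iff p j)
  rw [Nat.card_congr (e1.trans e2), Nat.card_zmultiples, ZMod.addOrderOf_coe p
    (pow_ne_zero 2 hpf.out.ne_zero), Nat.gcd_eq_right (dvd_pow_self p two_ne_zero), pow_two,
    Nat.mul_div_cancel _ hpf.out.pos]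

theorem card_ne (c₀ : ZMod p) : Nat.card {c : ZMod p // c ≠ c₀} = p - 1 := by
  haveI : NeZero p := ⟨hpf.out.ne_zero⟩
  rw [Nat.card_eq_fintype_card]
  have : Fintype.card {c : ZMod p // ¬ (c = c₀)} =
      Fintype.card (ZMod p) - Fintype.card {c : ZMod p // c = c₀} :=
    Fintype.card_subtype_compl _
  rw [this, Fintype.card_subtype_eq, ZMod.card]

theorem deg_E_thm (v : Vert (p^2)) (c₀ : ZMod p) (hv : v.1 = E p c₀) :
    deg (p^2) v = 2 * p + 1 := by
  set f : Bool ⊕ ({j : ZMod (p^2) // φ p j = c₀} ⊕ {c : ZMod p // c ≠ c₀}) → Vert (p^2) :=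
    fun x => Sum.elim (fun b => if b then vZr p else vZp p)
      (Sum.elim (fun j => vS p j.1) (fun c => vE p c.1)) x with hf
  have hinj : Function.Injective f := by
    rintro (b | j | c) (b' | j' | c') h <;>
      simp only [hf, Sum.elim_inl, Sum.elim_inr] at h
    · cases b <;> cases b' <;> simp_all
      · exact absurd (congrArg Subtype.val h) (Zr_ne_Zp p).symm
      · exact absurd (congrArg Subtype.val h) (Zr_ne_Zp p)
    · cases b <;> simp only [if_true, if_false, Bool.false_eq_true] at h
      · exact absurd (congrArg Subtype.val h) (S_ne_Zp p j'.1).symm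
      · exact absurd (congrArg Subtype.val h) (S_ne_Zr p j'.1).symm
    · cases b <;> simp only [if_true, if_false, Bool.false_eq_true] at h
      · exact absurd (congrArg Subtype.val h) (E_ne_Zp p c'.1).symm
      · exact absurd (congrArg Subtype.val h) (E_ne_Zr p c'.1).symm
    · cases b' <;> simp only [if_true, if_false, Bool.false_eq_true] at h
      · exact absurd (congrArg Subtype.val h) (S_ne_Zp p j.1)
      · exact absurd (congrArg Subtype.val h) (S_ne_Zr p j.1)
    · exact congrArg (Sum.inr ∘ Sum.inl) (Subtype.ext (S_inj p (congrArg Subtype.val h)))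
    · exact absurd (congrArg Subtype.val h) (S_ne_E p j.1 c'.1)
    · cases b' <;> simp only [if_true, if_false, Bool.false_eq_true] at h
      · exact absurd (congrArg Subtype.val h) (E_ne_Zp p c.1)
      · exact absurd (congrArg Subtype.val h) (E_ne_Zr p c.1)
    · exact absurd (congrArg Subtype.val h) (S_ne_E p j'.1 c.1).symm
    · exact congrArg (Sum.inr ∘ Sum.inr) (Subtype.ext (E_inj p (congrArg Subtype.val h)))
  have hset : (interGraph (DihedralGroup (p^2))).neighborSet v = Set.range f := by
    ext u
    rw [mem_nbhd, Set.mem_range]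
    constructor
    · rintro ⟨hne, hinf⟩
      obtain ⟨x, hx1, hxH, hxK⟩ := exists_of_inf_ne_bot hinf
      rw [hv] at hxH
      rcases subgroup_classify p u.1 with h | h | h | h | ⟨j', h⟩ | ⟨c, h⟩
      · exact absurd h u.2.1
      · exact absurd h u.2.2
      · exact ⟨Sum.inl true, (Subtype.ext h.symm : f (Sum.inl true) = u)⟩
      · exact ⟨Sum.inl false, (Subtype.ext h.symm : f (Sum.inl false) = u)⟩
      · rw [h, mem_zpowers_sr] at hxK
        rcases hxK with h1 | h1
        · exact absurd h1 hx1
        · subst h1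
          rw [sr_mem_E] at hxH
          exact ⟨Sum.inr (Sum.inl ⟨j', hxH⟩), (Subtype.ext h.symm : _ = u)⟩
      · by_cases hc : c = c₀
        · exact absurd (Subtype.ext (by rw [hv, h, hc]) : v = u) hne
        · exact ⟨Sum.inr (Sum.inr ⟨c, hc⟩), (Subtype.ext h.symm : _ = u)⟩
    · rintro ⟨o, rfl⟩
      rcases o with b | j | c
      · cases b
        · -- vZp
          refine ⟨fun h => (E_ne_Zp p c₀) ?_, ?_⟩
          · rw [← hv, h]; rfl
          · rw [hv]
            exact inf_ne_bot (rp_ne_one p) (rp_mem_E p c₀) (Subgroup.mem_zpowers _)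
        · -- vZr
          refine ⟨fun h => (E_ne_Zr p c₀) ?_, ?_⟩
          · rw [← hv, h]; rfl
          · rw [hv]
            exact inf_ne_bot (rp_ne_one p) (rp_mem_E p c₀)
              (mem_zpowers_r_one.mpr ⟨_, rfl⟩)
      · refine ⟨fun h => (S_ne_E p j.1 c₀).symm ?_, ?_⟩
        · rw [← hv, h]; rfl
        · rw [hv]
          exact inf_ne_bot (sr_ne_one p j.1) ((sr_mem_E p).mpr j.2) (Subgroup.mem_zpowers _)
      · refine ⟨fun h => c.2 (E_inj p ?_).symm, ?_⟩
        · rw [← hv, h]; rfl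
        · rw [hv]
          exact inf_ne_bot (rp_ne_one p) (rp_mem_E p c₀) (rp_mem_E p c.1)
  rw [deg, hset, Nat.card_range_of_injective hinj]
  haveI : NeZero p := ⟨hpf.out.ne_zero⟩
  rw [Nat.card_sum, Nat.card_sum, card_fiber, card_ne]
  have h2 : Nat.card Bool = 2 := by simp [Nat.card_eq_fintype_card]
  rw [h2]
  have := hpf.out.one_lt
  omega

end IG

theorem stmt3 (p : ℕ) (hp : p.Prime) :
    (∀ v : Vert (p ^ 2),
      (∃ j : ZMod (p ^ 2), v.1 = Subgroup.zpowers (DihedralGroup.sr j)) →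
        deg (p ^ 2) v = 1) ∧
    (∀ v : Vert (p ^ 2),
      (∃ i : ZMod (p ^ 2), v.1 = Subgroup.closure
          {DihedralGroup.r ((p : ℕ) : ZMod (p ^ 2)), DihedralGroup.sr i}) →
        deg (p ^ 2) v = 2 * p + 1) ∧
    (∀ v : Vert (p ^ 2),
      (v.1 = Subgroup.zpowers (DihedralGroup.r (1 : ZMod (p ^ 2))) ∨
        v.1 = Subgroup.zpowers (DihedralGroup.r ((p : ℕ) : ZMod (p ^ 2)))) →
        deg (p ^ 2) v = p + 1) := by
  haveI : Fact p.Prime := ⟨hp⟩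
  refine ⟨?_, ?_, ?_⟩
  · rintro v ⟨j, hv⟩
    exact IG.deg_S p v j hv
  · rintro v ⟨i, hv⟩
    exact IG.deg_E_thm p v (IG.φ p i) (hv.trans (IG.D_eq_E p i))
  · rintro v (hv | hv)
    · exact IG.deg_Zr p v hv
    · exact IG.deg_Zp p v hv
end

section
/- For a prime p, the intersection graph of D_{2p^2} has exactly (3p^2 + 3p + 2)/2 edges. -/
open DihedralGroup Subgroup


set_option linter.unusedSectionVars false

namespace Stmt4Aux

variable (p : ℕ) [hp : Fact p.Prime]

instance : NeZero p := ⟨(Fact.out (p := p.Prime)).ne_zero⟩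

instance : NeZero (p ^ 2) := ⟨pow_ne_zero 2 (Fact.out (p := p.Prime)).ne_zero⟩

lemma two_le : 2 ≤ p := (Fact.out (p := p.Prime)).two_le

instance : Fact (1 < p ^ 2) := ⟨by nlinarith [two_le p]⟩

abbrev D := DihedralGroup (p ^ 2)

/-- Cast homomorphism `ZMod p² → ZMod p`. -/
def phi : ZMod (p ^ 2) →+* ZMod p := ZMod.castHom (dvd_pow_self p (by norm_num)) (ZMod p)

lemma phi_natCast (m : ℕ) : phi p (m : ZMod (p ^ 2)) = (m : ZMod p) := map_natCast _ _

lemma phi_p : phi p ((p : ℕ) : ZMod (p ^ 2)) = 0 := by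
  rw [phi_natCast, ZMod.natCast_self]

lemma phi_one : phi p 1 = 1 := map_one _

lemma p_ne_zero : ((p : ℕ) : ZMod (p ^ 2)) ≠ 0 := by
  rw [Ne, ZMod.natCast_eq_zero_iff]
  intro h
  have := Nat.le_of_dvd (Fact.out (p := p.Prime)).pos h
  nlinarith [two_le p]

lemma one_ne_zero' : (1 : ZMod (p ^ 2)) ≠ 0 := one_ne_zero

lemma one_ne_zero'' : (1 : ZMod p) ≠ 0 := by
  haveI : Fact (1 < p) := ⟨(Fact.out (p := p.Prime)).one_lt⟩
  exact one_ne_zero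

lemma r_eq_one_iff {i : ZMod (p ^ 2)} : (r i : D p) = 1 ↔ i = 0 := by
  rw [DihedralGroup.one_def]
  constructor
  · intro h; injection h
  · rintro rfl; rfl

lemma sr_ne_one (i : ZMod (p ^ 2)) : (sr i : D p) ≠ 1 := by
  rw [DihedralGroup.one_def]; intro h; injection h

/-! ### The subgroups -/

/-- The rotation subgroup of order `p ^ 2`. -/
def A : Subgroup (D p) where
  carrier := {x | ∃ i, x = r i}
  one_mem' := ⟨0, rfl⟩
  mul_mem' := by rintro _ _ ⟨i, rfl⟩ ⟨j, rfl⟩; exact ⟨i + j, rfl⟩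
  inv_mem' := by rintro _ ⟨i, rfl⟩; exact ⟨-i, rfl⟩

/-- The rotation subgroup of order `p`. -/
def B : Subgroup (D p) where
  carrier := {x | ∃ i, x = r i ∧ phi p i = 0}
  one_mem' := ⟨0, rfl, map_zero _⟩
  mul_mem' := by
    rintro _ _ ⟨i, rfl, hi⟩ ⟨j, rfl, hj⟩
    exact ⟨i + j, rfl, by rw [map_add, hi, hj, add_zero]⟩
  inv_mem' := by
    rintro _ ⟨i, rfl, hi⟩
    exact ⟨-i, rfl, by rw [map_neg, hi, neg_zero]⟩

/-- A reflection subgroup of order `2`. -/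
def Refl (a : ZMod (p ^ 2)) : Subgroup (D p) where
  carrier := {x | x = 1 ∨ x = sr a}
  one_mem' := Or.inl rfl
  mul_mem' := by
    rintro _ _ (rfl | rfl) (rfl | rfl)
    · exact Or.inl (one_mul 1)
    · exact Or.inr (one_mul _)
    · exact Or.inr (mul_one _)
    · exact Or.inl (by rw [sr_mul_sr, sub_self, ← DihedralGroup.one_def])
  inv_mem' := by
    rintro _ (rfl | rfl)
    · exact Or.inl inv_one
    · exact Or.inr rfl

/-- A dihedral subgroup of order `2p`. -/
def Dih (b : ZMod p) : Subgroup (D p) where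
  carrier := {x | (∃ i, x = r i ∧ phi p i = 0) ∨ ∃ i, x = sr i ∧ phi p i = b}
  one_mem' := Or.inl ⟨0, rfl, map_zero _⟩
  mul_mem' := by
    rintro _ _ (⟨i, rfl, hi⟩ | ⟨i, rfl, hi⟩) (⟨j, rfl, hj⟩ | ⟨j, rfl, hj⟩)
    · exact Or.inl ⟨i + j, rfl, by rw [map_add, hi, hj, add_zero]⟩
    · exact Or.inr ⟨j - i, rfl, by rw [map_sub, hi, hj, sub_zero]⟩
    · exact Or.inr ⟨i + j, rfl, by rw [map_add, hi, hj, add_zero]⟩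
    · exact Or.inl ⟨j - i, rfl, by rw [map_sub, hi, hj, sub_self]⟩
  inv_mem' := by
    rintro _ (⟨i, rfl, hi⟩ | ⟨i, rfl, hi⟩)
    · exact Or.inl ⟨-i, rfl, by rw [map_neg, hi, neg_zero]⟩
    · exact Or.inr ⟨i, rfl, hi⟩

@[simp] lemma r_mem_A (i : ZMod (p ^ 2)) : r i ∈ A p := ⟨i, rfl⟩

@[simp] lemma sr_not_mem_A (i : ZMod (p ^ 2)) : sr i ∉ A p := by
  rintro ⟨j, h⟩; injection h

@[simp] lemma r_mem_B {i : ZMod (p ^ 2)} : r i ∈ B p ↔ phi p i = 0 := by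
  constructor
  · rintro ⟨j, hj, h⟩; injection hj with hj; rw [hj]; exact h
  · intro h; exact ⟨i, rfl, h⟩

@[simp] lemma sr_not_mem_B (i : ZMod (p ^ 2)) : sr i ∉ B p := by
  rintro ⟨j, h, -⟩; injection h

@[simp] lemma r_mem_Refl {i a : ZMod (p ^ 2)} : r i ∈ Refl p a ↔ i = 0 := by
  constructor
  · rintro (h | h)
    · exact (r_eq_one_iff p).mp h
    · injection h
  · rintro rfl; exact Or.inl (DihedralGroup.one_def).symm

@[simp] lemma sr_mem_Refl {i a : ZMod (p ^ 2)} : sr i ∈ Refl p a ↔ i = a := by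
  constructor
  · rintro (h | h)
    · exact absurd h (sr_ne_one p i)
    · injection h
  · rintro rfl; exact Or.inr rfl

@[simp] lemma r_mem_Dih {i : ZMod (p ^ 2)} {b : ZMod p} : r i ∈ Dih p b ↔ phi p i = 0 := by
  constructor
  · rintro (⟨j, hj, h⟩ | ⟨j, hj, h⟩)
    · injection hj with hj; rw [hj]; exact h
    · injection hj
  · intro h; exact Or.inl ⟨i, rfl, h⟩

@[simp] lemma sr_mem_Dih {i : ZMod (p ^ 2)} {b : ZMod p} : sr i ∈ Dih p b ↔ phi p i = b := by
  constructor
  · rintro (⟨j, hj, h⟩ | ⟨j, hj, h⟩)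
    · injection hj
    · injection hj with hj; rw [hj]; exact h
  · intro h; exact Or.inr ⟨i, rfl, h⟩

/-! ### Classification of additive subgroups of `ZMod (p ^ 2)` -/

/-- The kernel of `phi` as an additive subgroup. -/
def K : AddSubgroup (ZMod (p ^ 2)) where
  carrier := {i | phi p i = 0}
  zero_mem' := map_zero _
  add_mem' := by intro a b ha hb; simp only [Set.mem_setOf_eq, map_add] at *; rw [ha, hb, add_zero]
  neg_mem' := by intro a ha; simp only [Set.mem_setOf_eq, map_neg] at *; rw [ha, neg_zero]

@[simp] lemma mem_K {i : ZMod (p ^ 2)} : i ∈ K p ↔ phi p i = 0 := Iff.rfl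

lemma phi_eq_zero_iff {i : ZMod (p ^ 2)} : phi p i = 0 ↔ p ∣ i.val := by
  have h1 : phi p i = ((i.val : ℕ) : ZMod p) := by
    rw [← phi_natCast, ZMod.natCast_zmod_val]
  rw [h1, ZMod.natCast_eq_zero_iff]

lemma K_eq_zmultiples : K p = AddSubgroup.zmultiples ((p : ℕ) : ZMod (p ^ 2)) := by
  apply le_antisymm
  · intro x hx
    rw [mem_K, phi_eq_zero_iff] at hx
    have hx' : x = (x.val / p : ℕ) • ((p : ℕ) : ZMod (p ^ 2)) := by
      rw [nsmul_eq_mul, ← Nat.cast_mul, Nat.div_mul_cancel hx, ZMod.natCast_zmod_val]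
    rw [hx']
    exact AddSubgroup.nsmul_mem _ (AddSubgroup.mem_zmultiples _) _
  · intro x hx
    obtain ⟨k, rfl⟩ := hx
    rw [mem_K, map_zsmul, phi_p, smul_zero]

lemma card_K : Nat.card (K p) = p := by
  rw [K_eq_zmultiples, Nat.card_zmultiples, ZMod.addOrderOf_coe p (NeZero.ne _)]
  have : (p ^ 2).gcd p = p := Nat.gcd_eq_right (dvd_pow_self p (by norm_num))
  rw [this, pow_two, Nat.mul_div_cancel_left p (Fact.out (p := p.Prime)).pos]

lemma addSubgroup_trichotomy (S : AddSubgroup (ZMod (p ^ 2))) :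
    S = ⊥ ∨ S = K p ∨ S = ⊤ := by
  have hdvd : Nat.card S ∣ p ^ 2 := by
    have := AddSubgroup.card_addSubgroup_dvd_card S
    rwa [Nat.card_zmod] at this
  obtain ⟨k, hk2, hcard⟩ := (Nat.dvd_prime_pow (Fact.out (p := p.Prime))).mp hdvd
  interval_cases k
  · left
    exact AddSubgroup.eq_bot_of_card_eq _ (by simpa using hcard)
  · right; left
    have hle : S ≤ K p := by
      intro x hx
      have h1 : addOrderOf (⟨x, hx⟩ : S) ∣ p := by
        have := addOrderOf_dvd_natCard (⟨x, hx⟩ : S)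
        rwa [hcard, pow_one] at this
      have h2 : addOrderOf x ∣ p := by
        rwa [← addOrderOf_injective S.subtype Subtype.coe_injective (⟨x, hx⟩ : S)] at h1
      have h3 : p • x = 0 := by
        rw [← addOrderOf_dvd_iff_nsmul_eq_zero] at *; exact h2
      rw [mem_K, phi_eq_zero_iff]
      have h4 : ((p * x.val : ℕ) : ZMod (p ^ 2)) = 0 := by
        rw [Nat.cast_mul, ZMod.natCast_zmod_val, ← nsmul_eq_mul, h3]
      rw [ZMod.natCast_eq_zero_iff] at h4
      obtain ⟨c, hc⟩ := h4
      refine ⟨c, ?_⟩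
      have hpos := (Fact.out (p := p.Prime)).pos
      have : p * x.val = p * (p * c) := by rw [hc]; ring
      exact Nat.eq_of_mul_eq_mul_left hpos this
    exact AddSubgroup.eq_of_le_of_card_ge hle (by rw [hcard, pow_one, card_K])
  · right; right
    exact AddSubgroup.eq_top_of_card_eq _ (by rw [hcard, Nat.card_zmod])

/-! ### Classification of subgroups of `D p` -/

/-- The additive subgroup of rotation indices of a subgroup. -/
def rotS (H : Subgroup (D p)) : AddSubgroup (ZMod (p ^ 2)) where
  carrier := {i | r i ∈ H}
  zero_mem' := by have := H.one_mem; rwa [DihedralGroup.one_def] at this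
  add_mem' := by
    intro a b ha hb
    have := H.mul_mem ha hb
    rwa [r_mul_r] at this
  neg_mem' := by
    intro a ha
    exact H.inv_mem ha

@[simp] lemma mem_rotS {i : ZMod (p ^ 2)} {H : Subgroup (D p)} :
    i ∈ rotS p H ↔ r i ∈ H := Iff.rfl

lemma sr_helper (a j : ZMod (p ^ 2)) : (sr a : D p) * r (j - a) = sr j := by
  rw [sr_mul_r, add_sub_cancel]

theorem subgroup_eq (H : Subgroup (D p)) :
    H = ⊥ ∨ H = ⊤ ∨ H = A p ∨ H = B p ∨ (∃ a, H = Refl p a) ∨ ∃ b, H = Dih p b := by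
  by_cases hsr : ∃ a, sr a ∈ H
  · obtain ⟨a, ha⟩ := hsr
    rcases addSubgroup_trichotomy p (rotS p H) with hS | hS | hS
    · -- `H = Refl a`
      refine Or.inr (Or.inr (Or.inr (Or.inr (Or.inl ⟨a, ?_⟩))))
      ext x
      cases x with
      | r i =>
        simp only [r_mem_Refl]
        constructor
        · intro hi
          have h2 : i ∈ rotS p H := hi
          rw [hS] at h2
          exact AddSubgroup.mem_bot.mp h2
        · rintro rfl
          exact (rotS p H).zero_mem
      | sr j =>
        simp only [sr_mem_Refl]
        constructor
        · intro hj
          have h2 : r (a - j) ∈ H := by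
            have := H.mul_mem hj ha
            rwa [sr_mul_sr] at this
          have h3 : a - j ∈ rotS p H := h2
          rw [hS, AddSubgroup.mem_bot, sub_eq_zero] at h3
          exact h3.symm
        · rintro rfl; exact ha
    · -- `H = Dih (phi a)`
      refine Or.inr (Or.inr (Or.inr (Or.inr (Or.inr ⟨phi p a, ?_⟩))))
      ext x
      cases x with
      | r i =>
        simp only [r_mem_Dih]
        constructor
        · intro hi
          have h2 : i ∈ rotS p H := hi
          rw [hS] at h2
          exact (mem_K p).mp h2
        · intro hi
          have h2 : i ∈ K p := hi
          rw [← hS] at h2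
          exact h2
      | sr j =>
        simp only [sr_mem_Dih]
        constructor
        · intro hj
          have h2 : r (a - j) ∈ H := by
            have := H.mul_mem hj ha
            rwa [sr_mul_sr] at this
          have h3 : a - j ∈ rotS p H := h2
          rw [hS, mem_K, map_sub, sub_eq_zero] at h3
          exact h3.symm
        · intro hj
          have h2 : j - a ∈ K p := by
            rw [mem_K, map_sub, hj, sub_self]
          rw [← hS] at h2
          have h3 : r (j - a) ∈ H := h2
          have := H.mul_mem ha h3
          rwa [sr_helper] at this
    · -- `H = ⊤`
      refine Or.inr (Or.inl ?_)
      rw [eq_top_iff]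
      intro x _
      cases x with
      | r i =>
        have h2 : i ∈ rotS p H := by rw [hS]; trivial
        exact h2
      | sr j =>
        have h2 : j - a ∈ rotS p H := by rw [hS]; trivial
        have h3 : r (j - a) ∈ H := h2
        have := H.mul_mem ha h3
        rwa [sr_helper] at this
  · push_neg at hsr
    rcases addSubgroup_trichotomy p (rotS p H) with hS | hS | hS
    · -- `H = ⊥`
      left
      rw [eq_bot_iff]
      intro x hx
      cases x with
      | r i =>
        have h2 : i ∈ rotS p H := hx
        rw [hS] at h2
        rw [Subgroup.mem_bot, r_eq_one_iff]
        exact AddSubgroup.mem_bot.mp h2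
      | sr j => exact absurd hx (hsr j)
    · -- `H = B`
      refine Or.inr (Or.inr (Or.inr (Or.inl ?_)))
      ext x
      cases x with
      | r i =>
        rw [r_mem_B]
        constructor
        · intro hi
          have h2 : i ∈ rotS p H := hi
          rw [hS] at h2
          exact (mem_K p).mp h2
        · intro hi
          have h2 : i ∈ K p := hi
          rw [← hS] at h2
          exact h2
      | sr j =>
        constructor
        · intro hx; exact absurd hx (hsr j)
        · intro hx; exact absurd hx (sr_not_mem_B p j)
    · -- `H = A`
      refine Or.inr (Or.inr (Or.inl ?_))
      ext x
      cases x with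
      | r i =>
        constructor
        · intro _; exact r_mem_A p i
        · intro _
          have h2 : i ∈ rotS p H := by rw [hS]; trivial
          exact h2
      | sr j =>
        constructor
        · intro hx; exact absurd hx (hsr j)
        · intro hx; exact absurd hx (sr_not_mem_A p j)

/-! ### Properness, distinctness, intersections -/

lemma ne_bot_of_mem {H : Subgroup (D p)} {x : D p} (hx : x ∈ H) (h1 : x ≠ 1) : H ≠ ⊥ :=
  fun h => h1 (Subgroup.mem_bot.mp (h ▸ hx))

lemma ne_top_of_not_mem {H : Subgroup (D p)} {x : D p} (hx : x ∉ H) : H ≠ ⊤ :=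
  fun h => hx (by rw [h]; trivial)

lemma r_one_ne_one : (r 1 : D p) ≠ 1 := by
  rw [Ne, r_eq_one_iff]; exact one_ne_zero' p

lemma r_p_ne_one : (r ((p : ℕ) : ZMod (p ^ 2)) : D p) ≠ 1 := by
  rw [Ne, r_eq_one_iff]; exact p_ne_zero p

lemma r_p_mem_B : (r ((p : ℕ) : ZMod (p ^ 2)) : D p) ∈ B p := (r_mem_B p).mpr (phi_p p)

lemma r_p_mem_Dih (b : ZMod p) : (r ((p : ℕ) : ZMod (p ^ 2)) : D p) ∈ Dih p b :=
  (r_mem_Dih p).mpr (phi_p p)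

lemma A_ne_bot : A p ≠ ⊥ := ne_bot_of_mem p (r_mem_A p 1) (r_one_ne_one p)
lemma A_ne_top : A p ≠ ⊤ := ne_top_of_not_mem p (sr_not_mem_A p 0)
lemma B_ne_bot : B p ≠ ⊥ := ne_bot_of_mem p (r_p_mem_B p) (r_p_ne_one p)
lemma B_ne_top : B p ≠ ⊤ := ne_top_of_not_mem p (sr_not_mem_B p 0)

lemma Refl_ne_bot (a : ZMod (p ^ 2)) : Refl p a ≠ ⊥ :=
  ne_bot_of_mem p ((sr_mem_Refl p).mpr rfl) (sr_ne_one p a)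

lemma Refl_ne_top (a : ZMod (p ^ 2)) : Refl p a ≠ ⊤ :=
  ne_top_of_not_mem p (x := r 1) (by rw [r_mem_Refl]; exact one_ne_zero' p)

lemma Dih_ne_bot (b : ZMod p) : Dih p b ≠ ⊥ :=
  ne_bot_of_mem p (r_p_mem_Dih p b) (r_p_ne_one p)

lemma Dih_ne_top (b : ZMod p) : Dih p b ≠ ⊤ :=
  ne_top_of_not_mem p (x := r 1) (by rw [r_mem_Dih, phi_one]; exact one_ne_zero'' p)

/-- A lift of `ZMod p` into `ZMod (p ^ 2)`. -/
def lift (b : ZMod p) : ZMod (p ^ 2) := (b.val : ZMod (p ^ 2))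

lemma phi_lift (b : ZMod p) : phi p (lift p b) = b := by
  rw [lift, phi_natCast, ZMod.natCast_zmod_val]

-- distinctness
lemma A_ne_B : A p ≠ B p := fun h => by
  have := h ▸ r_mem_A p 1
  rw [r_mem_B, phi_one] at this
  exact one_ne_zero'' p this

lemma A_ne_Refl (a : ZMod (p ^ 2)) : A p ≠ Refl p a := fun h => by
  have := h ▸ r_mem_A p 1
  rw [r_mem_Refl] at this
  exact one_ne_zero' p this

lemma A_ne_Dih (b : ZMod p) : A p ≠ Dih p b := fun h => by
  have := h ▸ r_mem_A p 1
  rw [r_mem_Dih, phi_one] at this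
  exact one_ne_zero'' p this

lemma B_ne_Refl (a : ZMod (p ^ 2)) : B p ≠ Refl p a := fun h => by
  have := h ▸ r_p_mem_B p
  rw [r_mem_Refl] at this
  exact p_ne_zero p this

lemma B_ne_Dih (b : ZMod p) : B p ≠ Dih p b := fun h => by
  have : sr (lift p b) ∈ B p := by
    rw [h, sr_mem_Dih]; exact phi_lift p b
  exact sr_not_mem_B p _ this

lemma Refl_injective : Function.Injective (Refl p) := fun a a' h => by
  have : sr a ∈ Refl p a' := by rw [← h, sr_mem_Refl]
  exact (sr_mem_Refl p).mp this

lemma Refl_ne_Dih (a : ZMod (p ^ 2)) (b : ZMod p) : Refl p a ≠ Dih p b := fun h => by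
  have : (r ((p : ℕ) : ZMod (p ^ 2)) : D p) ∈ Refl p a := by
    rw [h]; exact r_p_mem_Dih p b
  rw [r_mem_Refl] at this
  exact p_ne_zero p this

lemma Dih_injective : Function.Injective (Dih p) := fun b b' h => by
  have : sr (lift p b) ∈ Dih p b' := by rw [← h, sr_mem_Dih]; exact phi_lift p b
  rw [sr_mem_Dih, phi_lift] at this
  exact this

-- intersections
lemma inf_ne_bot {H K : Subgroup (D p)} {x : D p} (hH : x ∈ H) (hK : x ∈ K) (h1 : x ≠ 1) :
    H ⊓ K ≠ ⊥ :=
  ne_bot_of_mem p (Subgroup.mem_inf.mpr ⟨hH, hK⟩) h1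

lemma A_inf_B : A p ⊓ B p ≠ ⊥ := inf_ne_bot p (r_mem_A p _) (r_p_mem_B p) (r_p_ne_one p)

lemma A_inf_Dih (b : ZMod p) : A p ⊓ Dih p b ≠ ⊥ :=
  inf_ne_bot p (r_mem_A p _) (r_p_mem_Dih p b) (r_p_ne_one p)

lemma B_inf_Dih (b : ZMod p) : B p ⊓ Dih p b ≠ ⊥ :=
  inf_ne_bot p (r_p_mem_B p) (r_p_mem_Dih p b) (r_p_ne_one p)

lemma Dih_inf_Dih (b b' : ZMod p) : Dih p b ⊓ Dih p b' ≠ ⊥ :=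
  inf_ne_bot p (r_p_mem_Dih p b) (r_p_mem_Dih p b') (r_p_ne_one p)

lemma A_inf_Refl (a : ZMod (p ^ 2)) : A p ⊓ Refl p a = ⊥ := by
  rw [eq_bot_iff]
  rintro x ⟨hx1, hx2⟩
  rcases hx2 with rfl | rfl
  · exact Subgroup.mem_bot.mpr rfl
  · exact absurd hx1 (sr_not_mem_A p a)

lemma B_inf_Refl (a : ZMod (p ^ 2)) : B p ⊓ Refl p a = ⊥ := by
  rw [eq_bot_iff]
  rintro x ⟨hx1, hx2⟩
  rcases hx2 with rfl | rfl
  · exact Subgroup.mem_bot.mpr rfl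
  · exact absurd hx1 (sr_not_mem_B p a)

lemma Refl_inf_Refl {a a' : ZMod (p ^ 2)} (h : a ≠ a') : Refl p a ⊓ Refl p a' = ⊥ := by
  rw [eq_bot_iff]
  rintro x ⟨hx1, hx2⟩
  rcases hx1 with rfl | rfl
  · exact Subgroup.mem_bot.mpr rfl
  · exact absurd ((sr_mem_Refl p).mp hx2) h

lemma Refl_inf_Dih_of_ne {a : ZMod (p ^ 2)} {b : ZMod p} (h : phi p a ≠ b) :
    Refl p a ⊓ Dih p b = ⊥ := by
  rw [eq_bot_iff]
  rintro x ⟨hx1, hx2⟩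
  rcases hx1 with rfl | rfl
  · exact Subgroup.mem_bot.mpr rfl
  · exact absurd ((sr_mem_Dih p).mp hx2) h

lemma Refl_inf_Dih_of_eq {a : ZMod (p ^ 2)} {b : ZMod p} (h : phi p a = b) :
    Refl p a ⊓ Dih p b ≠ ⊥ :=
  inf_ne_bot p ((sr_mem_Refl p).mpr rfl) ((sr_mem_Dih p).mpr h) (sr_ne_one p a)

/-! ### The model graph -/

abbrev MV := Bool ⊕ (ZMod (p ^ 2) ⊕ ZMod p)

/-- The adjacency function of the model graph. -/
def madj : MV p → MV p → Bool
  | .inl a, .inl b => decide (a ≠ b)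
  | .inl _, .inr (.inr _) => true
  | .inr (.inr _), .inl _ => true
  | .inr (.inl a), .inr (.inr b) => decide (phi p a = b)
  | .inr (.inr b), .inr (.inl a) => decide (phi p a = b)
  | .inr (.inr b), .inr (.inr b') => decide (b ≠ b')
  | _, _ => false

/-- The model graph. -/
def MG : SimpleGraph (MV p) where
  Adj x y := madj p x y = true
  symm := ⟨by
    rintro (a | a | a) (b | b | b) h <;>
      simp only [madj, decide_eq_true_eq] at h ⊢ <;>
      first
        | trivial
        | exact Ne.symm h
        | exact h⟩
  loopless := ⟨by
    rintro (a | a | a) h <;> simp [madj] at h⟩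

lemma MG_adj {x y : MV p} : (MG p).Adj x y ↔ madj p x y = true := Iff.rfl

instance : DecidableRel (MG p).Adj := fun x y =>
  inferInstanceAs (Decidable (madj p x y = true))

lemma fiber_card (b : ZMod p) :
    (Finset.univ.filter fun i : ZMod (p ^ 2) => phi p i = b).card = p := by
  have hpos := (Fact.out (p := p.Prime)).pos
  have h2 := two_le p
  have key : (Finset.univ.filter fun i : ZMod (p ^ 2) => phi p i = b).card
      = (Finset.univ : Finset (ZMod p)).card := by
    apply Finset.card_nbij' (fun x => ((x.val / p : ℕ) : ZMod p))
        (fun k => ((b.val + p * k.val : ℕ) : ZMod (p ^ 2)))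
    · intro x _; exact Finset.mem_univ _
    · intro k _
      beta_reduce
      rw [Finset.mem_coe, Finset.mem_filter]
      refine ⟨Finset.mem_univ _, ?_⟩
      rw [phi_natCast]
      push_cast
      simp [ZMod.natCast_self, ZMod.natCast_zmod_val]
    · intro x hx
      beta_reduce
      rw [Finset.mem_coe, Finset.mem_filter] at hx
      have hphi : x.val % p = b.val := by
        have h1 : ((x.val : ℕ) : ZMod p) = b := by
          rw [← phi_natCast, ZMod.natCast_zmod_val]; exact hx.2
        have := congrArg ZMod.val h1
        rwa [ZMod.val_natCast] at this
      have hxlt : x.val < p ^ 2 := ZMod.val_lt x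
      have hdivlt : x.val / p < p := by
        rw [Nat.div_lt_iff_lt_mul hpos, ← pow_two]; exact hxlt
      have hval : ((x.val / p : ℕ) : ZMod p).val = x.val / p := by
        rw [ZMod.val_natCast, Nat.mod_eq_of_lt hdivlt]
      rw [hval, ← hphi, show x.val % p + p * (x.val / p) = x.val from Nat.mod_add_div _ _]
      exact ZMod.natCast_zmod_val x
    · intro k _
      have hklt : k.val < p := ZMod.val_lt k
      have hblt : b.val < p := ZMod.val_lt b
      have hlt : b.val + p * k.val < p ^ 2 := by nlinarith
      have hval : ((b.val + p * k.val : ℕ) : ZMod (p ^ 2)).val = b.val + p * k.val := by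
        rw [ZMod.val_natCast, Nat.mod_eq_of_lt hlt]
      beta_reduce
      rw [hval]
      have : (b.val + p * k.val) / p = k.val := by
        rw [Nat.add_mul_div_left _ _ hpos, Nat.div_eq_of_lt hblt, zero_add]
      rw [this, ZMod.natCast_zmod_val]
  rw [key, Finset.card_univ, ZMod.card]

lemma deg_eq (v : MV p) :
    (MG p).degree v = ∑ u : MV p, if (MG p).Adj v u then 1 else 0 := by
  rw [SimpleGraph.degree, SimpleGraph.neighborFinset_eq_filter, Finset.card_filter]

lemma sum_split (f : MV p → ℕ) :
    ∑ u : MV p, f u = (∑ a : Bool, f (.inl a)) +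
      ((∑ i : ZMod (p ^ 2), f (.inr (.inl i))) + (∑ b : ZMod p, f (.inr (.inr b)))) := by
  rw [Fintype.sum_sum_type]
  congr 1
  rw [Fintype.sum_sum_type]

lemma deg_rot (a : Bool) : (MG p).degree (.inl a) = p + 1 := by
  rw [deg_eq, sum_split]
  have h1 : (∑ x : Bool, if (MG p).Adj (.inl a) (.inl x) then 1 else 0) = 1 := by
    cases a <;> simp [MG_adj, madj, Fintype.sum_bool]
  have h2 : (∑ i : ZMod (p ^ 2), if (MG p).Adj (.inl a) (.inr (.inl i)) then 1 else 0) = 0 := by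
    cases a <;> simp [MG_adj, madj]
  have h3 : (∑ b : ZMod p, if (MG p).Adj (.inl a) (.inr (.inr b)) then 1 else 0) = p := by
    cases a <;> simp [MG_adj, madj, Finset.card_univ, ZMod.card]
  rw [h1, h2, h3]
  omega

lemma deg_refl (i : ZMod (p ^ 2)) : (MG p).degree (.inr (.inl i)) = 1 := by
  rw [deg_eq, sum_split]
  have h1 : (∑ x : Bool, if (MG p).Adj (.inr (.inl i)) (.inl x) then 1 else 0) = 0 := by
    simp [MG_adj, madj]
  have h2 : (∑ j : ZMod (p ^ 2), if (MG p).Adj (.inr (.inl i)) (.inr (.inl j)) then 1 else 0)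
      = 0 := by
    simp [MG_adj, madj]
  have h3 : (∑ b : ZMod p, if (MG p).Adj (.inr (.inl i)) (.inr (.inr b)) then 1 else 0) = 1 := by
    simp only [MG_adj, madj, decide_eq_true_eq]
    rw [Finset.sum_ite_eq (Finset.univ) (phi p i) (fun _ => 1)]
    simp
  rw [h1, h2, h3]

lemma deg_dih (b : ZMod p) : (MG p).degree (.inr (.inr b)) = 2 * p + 1 := by
  have h2le := two_le p
  rw [deg_eq, sum_split]
  have h1 : (∑ x : Bool, if (MG p).Adj (.inr (.inr b)) (.inl x) then 1 else 0) = 2 := by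
    simp [MG_adj, madj, Fintype.sum_bool]
  have h2 : (∑ i : ZMod (p ^ 2), if (MG p).Adj (.inr (.inr b)) (.inr (.inl i)) then 1 else 0)
      = p := by
    simp only [MG_adj, madj, decide_eq_true_eq]
    rw [← Finset.card_filter]
    exact fiber_card p b
  have h3 : (∑ b' : ZMod p, if (MG p).Adj (.inr (.inr b)) (.inr (.inr b')) then 1 else 0)
      = p - 1 := by
    simp only [MG_adj, madj, decide_eq_true_eq]
    rw [← Finset.card_filter]
    have : (Finset.univ.filter fun b' : ZMod p => b ≠ b') = Finset.univ.erase b := by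
      ext x
      simp [Finset.mem_erase, ne_comm]
    rw [this, Finset.card_erase_of_mem (Finset.mem_univ b), Finset.card_univ, ZMod.card]
  rw [h1, h2, h3]
  omega

theorem MG_edges : 2 * (MG p).edgeFinset.card = 3 * p ^ 2 + 3 * p + 2 := by
  have h2le := two_le p
  rw [← SimpleGraph.sum_degrees_eq_twice_card_edges, sum_split]
  have h1 : (∑ a : Bool, (MG p).degree (.inl a)) = 2 * (p + 1) := by
    rw [Fintype.sum_bool, deg_rot, deg_rot]; ring
  have h2 : (∑ i : ZMod (p ^ 2), (MG p).degree (.inr (.inl i))) = p ^ 2 := by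
    rw [Finset.sum_congr rfl fun i _ => deg_refl p i]
    simp [Finset.card_univ, ZMod.card]
  have h3 : (∑ b : ZMod p, (MG p).degree (.inr (.inr b))) = p * (2 * p + 1) := by
    rw [Finset.sum_congr rfl fun b _ => deg_dih p b]
    simp [Finset.card_univ, ZMod.card, mul_comm]
  rw [h1, h2, h3]
  ring

/-! ### The isomorphism -/

/-- The subgroup associated to a model vertex. -/
def fsub : MV p → Subgroup (D p)
  | .inl true => A p
  | .inl false => B p
  | .inr (.inl a) => Refl p a
  | .inr (.inr b) => Dih p b

lemma fsub_ne_bot (v : MV p) : fsub p v ≠ ⊥ := by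
  rcases v with (_ | _) | a | b
  · exact B_ne_bot p
  · exact A_ne_bot p
  · exact Refl_ne_bot p a
  · exact Dih_ne_bot p b

lemma fsub_ne_top (v : MV p) : fsub p v ≠ ⊤ := by
  rcases v with (_ | _) | a | b
  · exact B_ne_top p
  · exact A_ne_top p
  · exact Refl_ne_top p a
  · exact Dih_ne_top p b

lemma fsub_injective : Function.Injective (fsub p) := by
  rintro ((x | x) | a | b) ((y | y) | a' | b') h <;>
    simp only [fsub] at h
  · rfl
  · exact absurd h.symm (A_ne_B p)
  · exact absurd h (B_ne_Refl p a')
  · exact absurd h (B_ne_Dih p b')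
  · exact absurd h (A_ne_B p)
  · rfl
  · exact absurd h (A_ne_Refl p a')
  · exact absurd h (A_ne_Dih p b')
  · exact absurd h.symm (B_ne_Refl p a)
  · exact absurd h.symm (A_ne_Refl p a)
  · rw [Refl_injective p h]
  · exact absurd h (Refl_ne_Dih p a b')
  · exact absurd h.symm (B_ne_Dih p b)
  · exact absurd h.symm (A_ne_Dih p b)
  · exact absurd h.symm (Refl_ne_Dih p a' b)
  · rw [Dih_injective p h]

/-- The vertex map of the isomorphism. -/
def fvert (v : MV p) : Vert (p ^ 2) := ⟨fsub p v, fsub_ne_bot p v, fsub_ne_top p v⟩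

lemma fvert_bijective : Function.Bijective (fvert p) := by
  constructor
  · intro x y h
    exact fsub_injective p (congrArg Subtype.val h)
  · rintro ⟨H, hb, ht⟩
    rcases subgroup_eq p H with rfl | rfl | rfl | rfl | ⟨a, rfl⟩ | ⟨b, rfl⟩
    · exact absurd rfl hb
    · exact absurd rfl ht
    · exact ⟨.inl true, rfl⟩
    · exact ⟨.inl false, rfl⟩
    · exact ⟨.inr (.inl a), rfl⟩
    · exact ⟨.inr (.inr b), rfl⟩

lemma adj_iff (x y : MV p) :
    (interGraph (D p)).Adj (fvert p x) (fvert p y) ↔ (MG p).Adj x y := by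
  have hne : fvert p x ≠ fvert p y ↔ x ≠ y :=
    not_congr ⟨fun h => (fvert_bijective p).1 h, fun h => h ▸ rfl⟩
  show (fvert p x ≠ fvert p y ∧ fsub p x ⊓ fsub p y ≠ ⊥) ↔ _
  rw [hne, MG_adj]
  rcases x with ((_ | _) | a | b) <;> rcases y with ((_ | _) | a' | b')
  · exact iff_of_false (fun h => h.1 rfl) (by simp [madj])
  · exact iff_of_true ⟨by simp, by rw [inf_comm]; exact A_inf_B p⟩ (by simp [madj])
  · exact iff_of_false (fun h => h.2 (B_inf_Refl p a')) (by simp [madj])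
  · exact iff_of_true ⟨by simp, B_inf_Dih p b'⟩ (by simp [madj])
  · exact iff_of_true ⟨by simp, A_inf_B p⟩ (by simp [madj])
  · exact iff_of_false (fun h => h.1 rfl) (by simp [madj])
  · exact iff_of_false (fun h => h.2 (A_inf_Refl p a')) (by simp [madj])
  · exact iff_of_true ⟨by simp, A_inf_Dih p b'⟩ (by simp [madj])
  · exact iff_of_false (fun h => h.2 (by rw [inf_comm]; exact B_inf_Refl p a)) (by simp [madj])
  · exact iff_of_false (fun h => h.2 (by rw [inf_comm]; exact A_inf_Refl p a)) (by simp [madj])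
  · refine iff_of_false ?_ (by simp [madj])
    rintro ⟨hne', hinf⟩
    exact hinf (Refl_inf_Refl p fun he => hne' (by rw [he]))
  · show _ ↔ decide (phi p a = b') = true
    rw [decide_eq_true_eq]
    constructor
    · rintro ⟨-, hinf⟩
      by_contra h
      exact hinf (Refl_inf_Dih_of_ne p h)
    · intro h
      exact ⟨by simp, Refl_inf_Dih_of_eq p h⟩
  · exact iff_of_true ⟨by simp, by rw [inf_comm]; exact B_inf_Dih p b⟩ (by simp [madj])
  · exact iff_of_true ⟨by simp, by rw [inf_comm]; exact A_inf_Dih p b⟩ (by simp [madj])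
  · show _ ↔ decide (phi p a' = b) = true
    rw [decide_eq_true_eq]
    constructor
    · rintro ⟨-, hinf⟩
      by_contra h
      exact hinf (by rw [inf_comm]; exact Refl_inf_Dih_of_ne p h)
    · intro h
      exact ⟨by simp, by rw [inf_comm]; exact Refl_inf_Dih_of_eq p h⟩
  · show _ ↔ decide (b ≠ b') = true
    rw [decide_eq_true_eq]
    constructor
    · rintro ⟨hne', -⟩
      exact fun he => hne' (by rw [he])
    · intro h
      exact ⟨fun hinr => h (by simpa using hinr), Dih_inf_Dih p b b'⟩

/-- The graph isomorphism between the model graph and the intersection graph. -/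
noncomputable def iso : MG p ≃g interGraph (D p) where
  toEquiv := Equiv.ofBijective (fvert p) (fvert_bijective p)
  map_rel_iff' := by
    intro x y
    exact adj_iff p x y

theorem main : 2 * Nat.card (interGraph (D p)).edgeSet = 3 * p ^ 2 + 3 * p + 2 := by
  have e := (iso p).mapEdgeSet
  rw [← Nat.card_congr e, Nat.card_eq_fintype_card, ← SimpleGraph.edgeFinset_card]
  exact MG_edges p

end Stmt4Aux

theorem stmt4 (p : ℕ) (hp : p.Prime) :
    2 * Nat.card (interGraph (DihedralGroup (p ^ 2))).edgeSet = 3 * p ^ 2 + 3 * p + 2 := by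
  haveI : Fact p.Prime := ⟨hp⟩
  exact Stmt4Aux.main p
end

section
/- For a prime p, the intersection graph of D_{2p^2} is connected and has diameter 3. -/
open DihedralGroup Subgroup

/-! ### Auxiliary lemmas -/

lemma myr_pow {n : ℕ} (a : ZMod n) (k : ℕ) : (r a)^k = r ((k : ZMod n) * a) := by
  induction k with
  | zero => simp
  | succ k ih => rw [pow_succ, ih, r_mul_r]; push_cast; ring_nf

lemma mem_zpowers_sr {n : ℕ} {i : ZMod n} {x : DihedralGroup n} :
    x ∈ zpowers (sr i) ↔ x = 1 ∨ x = sr i := by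
  constructor
  · rintro ⟨k, rfl⟩
    have h2 : (sr i : DihedralGroup n) ^ (2:ℤ) = 1 := by
      rw [zpow_two, sr_mul_self]
    rcases Int.even_or_odd k with ⟨m, rfl⟩ | ⟨m, rfl⟩
    · left; show sr i ^ (m+m) = 1; rw [← two_mul, zpow_mul, h2, one_zpow]
    · right; show sr i ^ (2*m+1) = sr i
      rw [zpow_add, zpow_mul, h2, one_zpow, one_mul, zpow_one]
  · rintro (rfl | rfl)
    · exact one_mem _
    · exact mem_zpowers _

lemma walk_len_two {V : Type*} {G : SimpleGraph V} {u v : V} (w : G.Walk u v)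
    (h : w.length = 2) : ∃ x, G.Adj u x ∧ G.Adj x v := by
  cases w with
  | nil => simp at h
  | cons ha w' =>
    exact ⟨_, ha, w'.adj_of_length_eq_one (by simpa using h)⟩

/-- Reduction homomorphism between dihedral groups. -/
def dmap {n m : ℕ} (h : m ∣ n) : DihedralGroup n →* DihedralGroup m where
  toFun x := match x with
    | .r a => .r (ZMod.castHom h (ZMod m) a)
    | .sr a => .sr (ZMod.castHom h (ZMod m) a)
  map_one' := by
    show DihedralGroup.r _ = DihedralGroup.r 0
    rw [map_zero]
  map_mul' := by
    rintro (a | a) (b | b)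
    · exact congrArg DihedralGroup.r (map_add _ a b)
    · exact congrArg DihedralGroup.sr (map_sub _ b a)
    · exact congrArg DihedralGroup.sr (map_add _ a b)
    · exact congrArg DihedralGroup.r (map_sub _ b a)

@[simp] lemma dmap_r {n m : ℕ} (h : m ∣ n) (a : ZMod n) :
    dmap h (r a) = r (ZMod.castHom h (ZMod m) a) := rfl

@[simp] lemma dmap_sr {n m : ℕ} (h : m ∣ n) (a : ZMod n) :
    dmap h (sr a) = sr (ZMod.castHom h (ZMod m) a) := rfl

lemma exists_mul_eq_p {p : ℕ} (hp : p.Prime) (a : ZMod (p^2)) (ha : a ≠ 0) :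
    ∃ k : ZMod (p^2), k * a = (p : ZMod (p^2)) := by
  haveI : NeZero (p^2) := ⟨pow_ne_zero 2 hp.ne_zero⟩
  haveI : Fact p.Prime := ⟨hp⟩
  by_cases hdvd : p ∣ a.val
  · obtain ⟨c, hc⟩ := hdvd
    have hvlt : a.val < p^2 := a.val_lt
    have hcp : c < p := by
      by_contra hcge
      push_neg at hcge
      have : p * p ≤ p * c := Nat.mul_le_mul_left p hcge
      rw [← hc] at this
      have hpp : p^2 = p*p := sq p
      omega
    have hc0 : c ≠ 0 := by
      rintro rfl
      rw [mul_zero] at hc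
      exact ha (by rwa [← ZMod.val_eq_zero])
    have hcu : (c : ZMod p) ≠ 0 := by
      rw [Ne, ZMod.natCast_eq_zero_iff]
      intro hd
      exact absurd (Nat.le_of_dvd (Nat.pos_of_ne_zero hc0) hd) (not_le.2 hcp)
    set w := ((c : ZMod p)⁻¹).val with hw
    have hmod : (w * c) % p = 1 % p := by
      have h1 : ((w * c : ℕ) : ZMod p) = 1 := by
        push_cast [hw, ZMod.natCast_zmod_val]
        exact inv_mul_cancel₀ hcu
      rwa [← Nat.cast_one, ZMod.natCast_eq_natCast_iff'] at h1
    have key : w * c % p = 1 := by rw [hmod, Nat.mod_eq_of_lt hp.one_lt]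
    have hsplit : w * c = p * (w * c / p) + 1 := by
      conv_lhs => rw [← Nat.div_add_mod (w * c) p]
      rw [key]
    refine ⟨(w : ZMod (p^2)), ?_⟩
    have ha' : a = ((a.val : ℕ) : ZMod (p^2)) := (ZMod.natCast_zmod_val a).symm
    have h0 : ((p^2 : ℕ) : ZMod (p^2)) = 0 := ZMod.natCast_self _
    rw [ha', hc]
    calc (w : ZMod (p^2)) * ((p * c : ℕ) : ZMod (p^2))
        = ((p * (w * c) : ℕ) : ZMod (p^2)) := by push_cast; ring
      _ = ((p * (p * (w * c / p) + 1) : ℕ) : ZMod (p^2)) := by rw [← hsplit]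
      _ = ((p^2 * (w * c / p) + p : ℕ) : ZMod (p^2)) := by ring_nf
      _ = (p : ZMod (p^2)) := by
          rw [Nat.cast_add, Nat.cast_mul, h0, zero_mul, zero_add]
  · have hco : Nat.Coprime a.val (p^2) :=
      ((hp.coprime_iff_not_dvd.mpr hdvd).symm).pow_right 2
    have hu : IsUnit a := by
      rw [← ZMod.natCast_zmod_val a]
      exact (ZMod.isUnit_iff_coprime a.val (p^2)).mpr hco
    obtain ⟨u, rfl⟩ := hu
    exact ⟨(p : ZMod (p^2)) * ↑u⁻¹, by
      rw [mul_assoc, Units.inv_mul, mul_one]⟩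

lemma rp_mem {p : ℕ} (hp : p.Prime) {H : Subgroup (DihedralGroup (p^2))}
    {a : ZMod (p^2)} (ha : a ≠ 0) (haH : r a ∈ H) : r (p : ZMod (p^2)) ∈ H := by
  haveI : NeZero (p^2) := ⟨pow_ne_zero 2 hp.ne_zero⟩
  obtain ⟨k, hk⟩ := exists_mul_eq_p hp a ha
  have := pow_mem haH k.val
  rwa [myr_pow, ZMod.natCast_zmod_val, hk] at this

lemma classify {p : ℕ} (hp : p.Prime) (H : Subgroup (DihedralGroup (p^2)))
    (hH : H ≠ ⊥) : r (p : ZMod (p^2)) ∈ H ∨ ∃ i, H = zpowers (sr i) := by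
  by_cases hrot : ∃ a : ZMod (p^2), a ≠ 0 ∧ r a ∈ H
  · obtain ⟨a, ha, haH⟩ := hrot
    exact Or.inl (rp_mem hp ha haH)
  · push_neg at hrot
    right
    obtain ⟨g, hgH, hg1⟩ := H.bot_or_exists_ne_one.resolve_left hH
    match g, hgH, hg1 with
    | DihedralGroup.r a, hgH, hg1 =>
      exact absurd hgH (hrot a (fun h => hg1 (by rw [h, ← one_def])))
    | DihedralGroup.sr i, hgH, hg1 =>
      refine ⟨i, le_antisymm ?_ ((zpowers_le).mpr hgH)⟩
      intro x hx
      match x, hx with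
      | DihedralGroup.r a, hx =>
        have : a = 0 := by
          by_contra h
          exact hrot a h hx
        rw [this, ← one_def]
        exact one_mem _
      | DihedralGroup.sr j, hx =>
        have hr : r (j - i) ∈ H := by
          have := H.mul_mem hgH hx
          rwa [sr_mul_sr] at this
        have hji : j = i := sub_eq_zero.mp (by
          by_contra h
          exact hrot _ h hr)
        rw [hji]
        exact mem_zpowers _

lemma inf_ne_bot' {G : Type*} [Group G] {H K : Subgroup G} {x : G}
    (hx : x ≠ 1) (h1 : x ∈ H) (h2 : x ∈ K) : H ⊓ K ≠ ⊥ := by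
  intro h
  exact hx (Subgroup.mem_bot.mp (h ▸ Subgroup.mem_inf.mpr ⟨h1, h2⟩))

lemma sr_mem_of_inf_ne_bot {n : ℕ} {i : ZMod n} {K : Subgroup (DihedralGroup n)}
    (h : zpowers (sr i) ⊓ K ≠ ⊥) : sr i ∈ K := by
  obtain ⟨x, hx, hx1⟩ := (zpowers (sr i) ⊓ K).bot_or_exists_ne_one.resolve_left h
  obtain ⟨hxz, hxK⟩ := Subgroup.mem_inf.mp hx
  rcases mem_zpowers_sr.mp hxz with rfl | rfl
  · exact absurd rfl hx1
  · exact hxK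

theorem stmt5 (p : ℕ) (hp : p.Prime) :
    (interGraph (DihedralGroup (p ^ 2))).Connected ∧
      (interGraph (DihedralGroup (p ^ 2))).diam = 3 := by
  haveI : Fact p.Prime := ⟨hp⟩
  haveI : NeZero (p^2) := ⟨pow_ne_zero 2 hp.ne_zero⟩
  haveI : Fact (1 < p^2) := ⟨Nat.one_lt_pow two_ne_zero hp.one_lt⟩
  set G := interGraph (DihedralGroup (p^2)) with hG
  have hd : p ∣ p^2 := dvd_pow_self p two_ne_zero
  -- basic non-degeneracy facts
  have hplt : p < p^2 := by nlinarith [hp.two_le]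
  have hpne : (p : ZMod (p^2)) ≠ 0 := by
    rw [Ne, ZMod.natCast_eq_zero_iff]
    intro h
    exact absurd (Nat.le_of_dvd hp.pos h) (not_le.2 hplt)
  have hrp1 : r (p : ZMod (p^2)) ≠ 1 := by
    intro h
    rw [one_def] at h
    exact hpne (by injection h)
  have hsr1 : ∀ i : ZMod (p^2), sr i ≠ 1 := by
    intro i h
    rw [one_def] at h
    exact nomatch h
  have hr11 : r (1 : ZMod (p^2)) ≠ 1 := by
    intro h
    rw [one_def] at h
    exact one_ne_zero (by injection h)
  -- the reflection subgroups are proper nontrivial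
  have hzb : ∀ i : ZMod (p^2), zpowers (sr i) ≠ ⊥ := by
    intro i
    rw [Ne, zpowers_eq_bot]
    exact hsr1 i
  have hzt : ∀ i : ZMod (p^2), zpowers (sr i) ≠ ⊤ := by
    intro i h
    have : r (1 : ZMod (p^2)) ∈ zpowers (sr i) := h ▸ mem_top _
    rcases mem_zpowers_sr.mp this with h' | h'
    · exact hr11 h'
    · exact nomatch h'
  -- the dihedral subgroups D i of order 2p
  have hDt : ∀ j : ZMod p, comap (dmap hd) (zpowers (sr j)) ≠ ⊤ := by
    intro j h
    have h1 : r (1 : ZMod (p^2)) ∈ comap (dmap hd) (zpowers (sr j)) := h ▸ mem_top _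
    rw [Subgroup.mem_comap, dmap_r, map_one] at h1
    rcases mem_zpowers_sr.mp h1 with h' | h'
    · rw [one_def] at h'
      exact one_ne_zero (α := ZMod p) (by injection h')
    · exact nomatch h'
  have hrpD : ∀ j : ZMod p, r (p : ZMod (p^2)) ∈ comap (dmap hd) (zpowers (sr j)) := by
    intro j
    rw [Subgroup.mem_comap, dmap_r, ZMod.castHom_apply, ZMod.cast_natCast hd,
      ZMod.natCast_self, ← one_def]
    exact one_mem _
  have hDb : ∀ j : ZMod p, comap (dmap hd) (zpowers (sr j)) ≠ ⊥ := by
    intro j h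
    exact hrp1 (Subgroup.mem_bot.mp (h ▸ hrpD j))
  have hsrD : ∀ i : ZMod (p^2),
      sr i ∈ comap (dmap hd) (zpowers (sr (ZMod.castHom hd (ZMod p) i))) := by
    intro i
    rw [Subgroup.mem_comap, dmap_sr]
    exact mem_zpowers _
  -- every vertex is equal or adjacent to a vertex containing r p
  have key : ∀ u : Vert (p^2), ∃ w : Vert (p^2),
      (u = w ∨ G.Adj u w) ∧ r (p : ZMod (p^2)) ∈ w.1 := by
    intro u
    by_cases h : r (p : ZMod (p^2)) ∈ u.1
    · exact ⟨u, Or.inl rfl, h⟩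
    · rcases classify hp u.1 u.2.1 with h' | ⟨i, hi⟩
      · exact absurd h' h
      · refine ⟨⟨comap (dmap hd) (zpowers (sr (ZMod.castHom hd (ZMod p) i))),
          hDb _, hDt _⟩, Or.inr ⟨?_, ?_⟩, hrpD _⟩
        · intro he
          exact h (by rw [Subtype.ext_iff] at he; rw [he]; exact hrpD _)
        · exact inf_ne_bot' (hsr1 i) (hi ▸ mem_zpowers _) (hsrD i)
  -- one step bound
  have step : ∀ u w : Vert (p^2), (u = w ∨ G.Adj u w) → G.edist u w ≤ 1 := by
    rintro u w (rfl | h)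
    · rw [SimpleGraph.edist_self]; exact zero_le_one
    · rw [SimpleGraph.edist_eq_one_iff_adj.mpr h]
  -- upper bound on all distances
  have upper : ∀ u v : Vert (p^2), G.edist u v ≤ 3 := by
    intro u v
    obtain ⟨wu, hu, hup⟩ := key u
    obtain ⟨wv, hv, hvp⟩ := key v
    have h1 : G.edist u wu ≤ 1 := step u wu hu
    have h2 : G.edist wu wv ≤ 1 := by
      refine step wu wv ?_
      by_cases h : wu = wv
      · exact Or.inl h
      · exact Or.inr ⟨h, inf_ne_bot' hrp1 hup hvp⟩
    have h3 : G.edist wv v ≤ 1 := by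
      refine step wv v ?_
      rcases hv with h | h
      · exact Or.inl h.symm
      · exact Or.inr h.symm
    calc G.edist u v ≤ G.edist u wu + G.edist wu v := SimpleGraph.edist_triangle
      _ ≤ G.edist u wu + (G.edist wu wv + G.edist wv v) :=
          add_le_add (le_refl _) SimpleGraph.edist_triangle
      _ ≤ 1 + (1 + 1) := add_le_add h1 (add_le_add h2 h3)
      _ = 3 := by decide
  -- the two special vertices
  set u0 : Vert (p^2) := ⟨zpowers (sr 0), hzb 0, hzt 0⟩ with hu0
  set v0 : Vert (p^2) := ⟨zpowers (sr 1), hzb 1, hzt 1⟩ with hv0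
  have h01 : (0 : ZMod (p^2)) ≠ 1 := zero_ne_one
  have hne : u0 ≠ v0 := by
    intro h
    have h' : zpowers (sr (0 : ZMod (p^2))) = zpowers (sr 1) := congrArg Subtype.val h
    have : sr (0 : ZMod (p^2)) ∈ zpowers (sr (1 : ZMod (p^2))) := h' ▸ mem_zpowers _
    rcases mem_zpowers_sr.mp this with h'' | h''
    · exact hsr1 0 h''
    · exact h01 (by injection h'')
  have hnadj : ¬ G.Adj u0 v0 := by
    rintro ⟨-, hinf⟩
    apply hinf
    rw [eq_bot_iff_forall]
    intro x hx
    obtain ⟨hx0, hx1⟩ := Subgroup.mem_inf.mp hx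
    rcases mem_zpowers_sr.mp hx0 with rfl | rfl
    · rfl
    · rcases mem_zpowers_sr.mp hx1 with h'' | h''
      · exact h''
      · exact absurd (by injection h'') h01
  have hK : ∀ K : Vert (p^2), G.Adj u0 K → G.Adj K v0 → False := by
    intro K h1 h2
    have hs0 : sr (0 : ZMod (p^2)) ∈ K.1 := sr_mem_of_inf_ne_bot h1.2
    have hs1 : sr (1 : ZMod (p^2)) ∈ K.1 := by
      refine sr_mem_of_inf_ne_bot (fun h => h2.2 ?_)
      rwa [inf_comm] at h
    refine K.2.2 ?_
    have hr1K : r (1 : ZMod (p^2)) ∈ K.1 := by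
      have := K.1.mul_mem hs0 hs1
      rwa [sr_mul_sr, sub_zero] at this
    rw [eq_top_iff']
    rintro (a | a)
    · have := pow_mem hr1K a.val
      rwa [r_one_pow, ZMod.natCast_zmod_val] at this
    · have hra : r a ∈ K.1 := by
        have := pow_mem hr1K a.val
        rwa [r_one_pow, ZMod.natCast_zmod_val] at this
      have := K.1.mul_mem hs0 hra
      rwa [sr_mul_r, zero_add] at this
  -- lower bound
  have lower : (3 : ℕ∞) ≤ G.edist u0 v0 := by
    rw [SimpleGraph.edist_eq_sInf]
    refine le_sInf ?_
    rintro x ⟨w, rfl⟩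
    have hlen : 3 ≤ w.length := by
      have l0 : w.length ≠ 0 := fun h => hne (SimpleGraph.Walk.eq_of_length_eq_zero h)
      have l1 : w.length ≠ 1 := fun h => hnadj (w.adj_of_length_eq_one h)
      have l2 : w.length ≠ 2 := by
        intro h
        obtain ⟨x, hx1, hx2⟩ := walk_len_two w h
        exact hK x hx1 hx2
      omega
    show (3:ℕ∞) ≤ (w.length : ℕ∞)
    exact_mod_cast hlen
  have hediam : G.ediam = 3 :=
    le_antisymm (SimpleGraph.ediam_le_of_edist_le fun u v => upper u v)
      (le_trans lower SimpleGraph.edist_le_ediam)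
  constructor
  · haveI : Nonempty (Vert (p^2)) := ⟨u0⟩
    refine SimpleGraph.Connected.mk (fun u v => SimpleGraph.reachable_of_edist_ne_top ?_)
    intro h
    have := upper u v
    rw [h] at this
    exact absurd this (by decide)
  · rw [SimpleGraph.diam, hediam]
    rfl
end

section
/- For a prime p, in the intersection graph Γ of D_{2p^2}, the eccentricity of a vertex v is 2 if v is ⟨r⟩, ⟨r^p⟩, or one of the dihedral subgroups ⟨r^p, s r^i⟩, and 3 if v is a reflection subgroup of order 2. -/
open DihedralGroup Subgroup

namespace Stmt10Aux

variable {n : ℕ}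

lemma r_pow (a : ZMod n) (k : ℕ) : (r a) ^ k = r (k • a) := by
  induction k with
  | zero => rw [pow_zero, zero_nsmul, one_def]
  | succ k ih => rw [pow_succ, ih, r_mul_r, succ_nsmul]

lemma r_zpow (a : ZMod n) (k : ℤ) : (r a) ^ k = r (k • a) := by
  cases k with
  | ofNat k => simp [r_pow, natCast_zsmul]; ring
  | negSucc k =>
      rw [zpow_negSucc, r_pow]
      apply inv_eq_of_mul_eq_one_left
      rw [r_mul_r, one_def]
      congr 1
      rw [negSucc_zsmul]
      simp

lemma mem_zpowers_r {a x : ZMod n} :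
    r x ∈ zpowers (r a) ↔ x ∈ AddSubgroup.zmultiples a := by
  constructor
  · rintro ⟨k, hk⟩
    dsimp only at hk
    rw [r_zpow] at hk
    exact ⟨k, by injection hk⟩
  · rintro ⟨k, hk⟩
    exact ⟨k, by dsimp only; dsimp only at hk; rw [r_zpow, hk]⟩

lemma sr_not_mem_zpowers_r (a b : ZMod n) : sr b ∉ zpowers (r a) := by
  rintro ⟨k, hk⟩
  dsimp only at hk
  rw [r_zpow] at hk
  exact absurd hk (by simp)

lemma mem_zpowers_sr {j : ZMod n} {x : DihedralGroup n} :
    x ∈ zpowers (sr j) ↔ x = 1 ∨ x = sr j := by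
  constructor
  · rintro ⟨k, hk⟩
    dsimp only at hk
    rcases Int.even_or_odd k with ⟨m, hm⟩ | ⟨m, hm⟩
    · left
      rw [← hk, hm, ← two_mul, zpow_mul]
      rw [(by rw [zpow_two, sr_mul_self] : (sr j)^(2:ℤ) = 1), one_zpow]
    · right
      rw [← hk, hm, zpow_add, zpow_mul]
      rw [(by rw [zpow_two, sr_mul_self] : (sr j)^(2:ℤ) = 1), one_zpow, one_mul, zpow_one]
  · rintro (rfl | rfl)
    · exact one_mem _
    · exact mem_zpowers _

end Stmt10Aux
open DihedralGroup Subgroup Stmt10Aux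

namespace Stmt10Aux

variable (p : ℕ)

/-- The additive subgroup of multiples of `p` in `ZMod (p^2)`. -/
def A : AddSubgroup (ZMod (p ^ 2)) := AddSubgroup.zmultiples ((p : ℕ) : ZMod (p ^ 2))

/-- The dihedral subgroup `⟨r^p, s r^j⟩` of `DihedralGroup (p^2)`. -/
def D (j : ZMod (p ^ 2)) : Subgroup (DihedralGroup (p ^ 2)) where
  carrier := {x | match x with | .r a => a ∈ A p | .sr b => b - j ∈ A p}
  one_mem' := by show (0 : ZMod (p ^ 2)) ∈ A p; exact zero_mem _
  mul_mem' := by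
    rintro (⟨a⟩ | ⟨a⟩) (⟨b⟩ | ⟨b⟩) ha hb
    · show a + b ∈ A p; exact add_mem ha hb
    · show (b - a) - j ∈ A p
      rw [sub_right_comm]; exact sub_mem hb ha
    · show (a + b) - j ∈ A p
      rw [add_comm, add_sub_assoc]; exact add_mem hb ha
    · show b - a ∈ A p
      rw [(by ring : b - a = (b - j) - (a - j))]; exact sub_mem hb ha
  inv_mem' := by
    rintro (⟨a⟩ | ⟨a⟩) ha
    · show -a ∈ A p; exact neg_mem ha
    · exact ha

variable {p}

lemma mem_A_iff {a : ZMod (p ^ 2)} :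
    a ∈ A p ↔ ∃ k : ℤ, (k : ZMod (p ^ 2)) * ((p : ℕ) : ZMod (p ^ 2)) = a := by
  rw [A, AddSubgroup.mem_zmultiples_iff]
  refine exists_congr fun k => ?_
  rw [zsmul_eq_mul]

@[simp] lemma mem_D_r {j a : ZMod (p ^ 2)} : r a ∈ D p j ↔ a ∈ A p := Iff.rfl
@[simp] lemma mem_D_sr {j b : ZMod (p ^ 2)} : sr b ∈ D p j ↔ b - j ∈ A p := Iff.rfl

variable (hp : p.Prime)
include hp

lemma hpsq : NeZero (p ^ 2) := ⟨pow_ne_zero 2 hp.ne_zero⟩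

lemma one_ne_zero' : (1 : ZMod (p ^ 2)) ≠ 0 := by
  haveI : Fact (1 < p ^ 2) := ⟨Nat.one_lt_pow (by norm_num) hp.one_lt⟩
  exact one_ne_zero

lemma hpn0 : ((p : ℕ) : ZMod (p ^ 2)) ≠ 0 := by
  haveI := hpsq hp
  intro h
  rw [ZMod.natCast_eq_zero_iff] at h
  have := Nat.le_of_dvd hp.pos h
  nlinarith [hp.two_le]

lemma mul_p_eq_zero_of_mem_A {a : ZMod (p ^ 2)} (ha : a ∈ A p) :
    ((p : ℕ) : ZMod (p ^ 2)) * a = 0 := by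
  obtain ⟨k, hk⟩ := ha
  rw [← hk, mul_smul_comm]
  have : ((p : ℕ) : ZMod (p ^ 2)) * ((p : ℕ) : ZMod (p ^ 2)) = 0 := by
    rw [← Nat.cast_mul, ← pow_two, ZMod.natCast_self]
  rw [this, smul_zero]

lemma one_not_mem_A : (1 : ZMod (p ^ 2)) ∉ A p := fun h => by
  have := mul_p_eq_zero_of_mem_A hp h
  rw [mul_one] at this
  exact hpn0 hp this

lemma mem_A_of_mul_p {a : ZMod (p ^ 2)} (h : ((p : ℕ) : ZMod (p ^ 2)) * a = 0) :
    a ∈ A p := by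
  haveI := hpsq hp
  have hv : ((a.val : ℕ) : ZMod (p ^ 2)) = a := ZMod.natCast_rightInverse a
  have h2 : ((p * a.val : ℕ) : ZMod (p ^ 2)) = 0 := by push_cast; rw [hv]; exact h
  rw [ZMod.natCast_eq_zero_iff] at h2
  obtain ⟨c, hc0⟩ := h2
  have hc : a.val = p * c := Nat.eq_of_mul_eq_mul_left hp.pos (by rw [hc0]; ring)
  rw [mem_A_iff]
  refine ⟨(c : ℤ), ?_⟩
  rw [← hv, hc]
  push_cast
  ring

lemma p_mem_A : ((p : ℕ) : ZMod (p ^ 2)) ∈ A p := ⟨1, one_smul _ _⟩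

lemma exists_in_A {u : Subgroup (DihedralGroup (p ^ 2))} {a : ZMod (p ^ 2)}
    (ha : a ≠ 0) (hu : r a ∈ u) : ∃ b, b ≠ 0 ∧ b ∈ A p ∧ r b ∈ u := by
  by_cases h : ((p : ℕ) : ZMod (p ^ 2)) * a = 0
  · exact ⟨a, ha, mem_A_of_mul_p hp h, hu⟩
  · refine ⟨((p : ℕ) : ZMod (p ^ 2)) * a, h, ?_, ?_⟩
    · haveI := hpsq hp
      rw [mem_A_iff]
      refine ⟨(a.val : ℤ), ?_⟩
      push_cast
      rw [ZMod.natCast_rightInverse a]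
      ring
    · have := pow_mem hu p
      rwa [r_pow, nsmul_eq_mul] at this

/-- A nontrivial subgroup containing no nontrivial rotation is generated by a reflection. -/
lemma eq_zpowers_sr {u : Subgroup (DihedralGroup (p ^ 2))}
    (h : ∀ a : ZMod (p ^ 2), a ≠ 0 → r a ∉ u) (hu : u ≠ ⊥) :
    ∃ j, u = zpowers (sr j) := by
  rw [Ne, Subgroup.eq_bot_iff_forall] at hu
  push_neg at hu
  obtain ⟨x, hxu, hx1⟩ := hu
  obtain ⟨a⟩ | ⟨j⟩ := x
  · rcases eq_or_ne a 0 with rfl | ha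
    · exact absurd (one_def ▸ rfl) hx1
    · exact absurd hxu (h a ha)
  · refine ⟨j, le_antisymm ?_ ?_⟩
    · intro y hy
      obtain ⟨b⟩ | ⟨b⟩ := y
      · rcases eq_or_ne b 0 with rfl | hb
        · exact one_def ▸ one_mem _
        · exact absurd hy (h b hb)
      · have : sr j * sr b ∈ u := mul_mem hxu hy
        rw [sr_mul_sr] at this
        rcases eq_or_ne (b - j) 0 with hbj | hbj
        · rw [sub_eq_zero] at hbj
          rw [hbj]
          exact mem_zpowers _
        · exact absurd this (h _ hbj)
    · rw [zpowers_le]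
      exact hxu

end Stmt10Aux
namespace Stmt10Aux

variable {p : ℕ}

lemma exists_ne_one_of_inf {G : Type*} [Group G] {H K : Subgroup G} (h : H ⊓ K ≠ ⊥) :
    ∃ x, x ≠ 1 ∧ x ∈ H ∧ x ∈ K := by
  by_contra hc
  push_neg at hc
  refine h ((Subgroup.eq_bot_iff_forall _).mpr fun x hx => ?_)
  by_contra h1
  exact hc x h1 (Subgroup.mem_inf.mp hx).1 (Subgroup.mem_inf.mp hx).2

lemma inf_ne_bot {G : Type*} [Group G] {H K : Subgroup G} {x : G}
    (hx : x ≠ 1) (hH : x ∈ H) (hK : x ∈ K) : H ⊓ K ≠ ⊥ := fun h =>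
  hx ((Subgroup.eq_bot_iff_forall _).mp h x (Subgroup.mem_inf.mpr ⟨hH, hK⟩))

lemma sr_ne_one {m : ℕ} (b : ZMod m) : (sr b : DihedralGroup m) ≠ 1 := by
  intro h; rw [one_def] at h; injection h

lemma r_eq_one_iff {m : ℕ} {a : ZMod m} : (r a : DihedralGroup m) = 1 ↔ a = 0 := by
  rw [one_def]
  exact ⟨fun h => by injection h, fun h => by rw [h]⟩

lemma adj_iff {G : Type*} [Group G] {H K : {H : Subgroup G // H ≠ ⊥ ∧ H ≠ ⊤}} :
    (interGraph G).Adj H K ↔ H ≠ K ∧ H.1 ⊓ K.1 ≠ ⊥ := Iff.rfl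

variable (hp : p.Prime)
include hp

lemma closure_eq (j : ZMod (p ^ 2)) :
    closure {r ((p : ℕ) : ZMod (p ^ 2)), sr j} = D p j := by
  apply le_antisymm
  · rw [closure_le]
    rintro x (rfl | rfl)
    · exact p_mem_A hp
    · show j - j ∈ A p
      rw [sub_self]
      exact zero_mem _
  · intro x hx
    have hrmem : ∀ a ∈ A p, r a ∈ closure {r ((p : ℕ) : ZMod (p ^ 2)), sr j} := by
      intro a ha
      rw [mem_A_iff] at ha
      obtain ⟨k, hk⟩ := ha
      have h1 : (r ((p : ℕ) : ZMod (p ^ 2))) ^ k = r a := by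
        rw [r_zpow, zsmul_eq_mul, hk]
      exact h1 ▸ zpow_mem (subset_closure (by simp)) k
    obtain ⟨a⟩ | ⟨b⟩ := x
    · exact hrmem a hx
    · have h1 : sr j * r (b - j) = sr b := by
        rw [sr_mul_r]
        congr 1
        ring
      exact h1 ▸ mul_mem (subset_closure (by simp)) (hrmem _ hx)

lemma sr_mem_D (j : ZMod (p ^ 2)) : sr j ∈ D p j := by
  show j - j ∈ A p
  rw [sub_self]
  exact zero_mem _

lemma D_ne_bot (j : ZMod (p ^ 2)) : D p j ≠ ⊥ := fun h =>
  sr_ne_one j ((Subgroup.eq_bot_iff_forall _).mp h _ (sr_mem_D hp j))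

lemma D_ne_top (j : ZMod (p ^ 2)) : D p j ≠ ⊤ := fun h => by
  have : r (1 : ZMod (p ^ 2)) ∈ D p j := h ▸ mem_top _
  exact one_not_mem_A hp this

lemma zpowers_sr_ne_bot (j : ZMod (p ^ 2)) : zpowers (sr j) ≠ ⊥ := fun h =>
  sr_ne_one j ((Subgroup.eq_bot_iff_forall _).mp h _ (mem_zpowers _))

lemma zpowers_sr_ne_top (j : ZMod (p ^ 2)) : zpowers (sr j) ≠ ⊤ := fun h => by
  have : r (1 : ZMod (p ^ 2)) ∈ zpowers (sr j) := h ▸ mem_top _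
  rcases mem_zpowers_sr.mp this with h1 | h1
  · exact one_ne_zero' hp (r_eq_one_iff.mp h1)
  · exact absurd h1 (by simp)

/-- The dihedral subgroup `D p j` as a vertex. -/
def vD (j : ZMod (p ^ 2)) : Vert (p ^ 2) := ⟨D p j, D_ne_bot hp j, D_ne_top hp j⟩

/-- The reflection subgroup `⟨sr j⟩` as a vertex. -/
def vS (j : ZMod (p ^ 2)) : Vert (p ^ 2) :=
  ⟨zpowers (sr j), zpowers_sr_ne_bot hp j, zpowers_sr_ne_top hp j⟩

lemma rp_ne_one : (r ((p : ℕ) : ZMod (p ^ 2)) : DihedralGroup (p ^ 2)) ≠ 1 := fun h =>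
  hpn0 hp (r_eq_one_iff.mp h)

lemma walk_le_two (v u : Vert (p ^ 2))
    (hv : zpowers (r ((p : ℕ) : ZMod (p ^ 2))) ≤ v.1) :
    ∃ w : (interGraph (DihedralGroup (p ^ 2))).Walk v u, w.length ≤ 2 := by
  by_cases huv : v = u
  · subst huv
    exact ⟨.nil, by simp⟩
  by_cases hadj : v.1 ⊓ u.1 = ⊥
  swap
  · exact ⟨.cons (adj_iff.mpr ⟨huv, hadj⟩) .nil, by simp⟩
  have hno : ∀ a : ZMod (p ^ 2), a ≠ 0 → r a ∉ u.1 := by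
    intro a ha hau
    obtain ⟨b, hb0, hbA, hbu⟩ := exists_in_A hp ha hau
    have hbv : r b ∈ v.1 := hv (mem_zpowers_r.mpr hbA)
    have : r b ∈ v.1 ⊓ u.1 := Subgroup.mem_inf.mpr ⟨hbv, hbu⟩
    rw [hadj] at this
    exact hb0 (r_eq_one_iff.mp this)
  obtain ⟨j, hj⟩ := eq_zpowers_sr hp hno u.2.1
  have hpv : r ((p : ℕ) : ZMod (p ^ 2)) ∈ v.1 := hv (mem_zpowers _)
  have hpw : r ((p : ℕ) : ZMod (p ^ 2)) ∈ D p j := p_mem_A hp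
  have hsru : sr j ∈ u.1 := hj ▸ mem_zpowers _
  have hvw : v ≠ vD hp j := by
    intro h
    have hsv : sr j ∈ v.1 := by rw [h]; exact sr_mem_D hp j
    have : sr j ∈ v.1 ⊓ u.1 := Subgroup.mem_inf.mpr ⟨hsv, hsru⟩
    rw [hadj] at this
    exact sr_ne_one j this
  have hwu : vD hp j ≠ u := by
    intro h
    have : r ((p : ℕ) : ZMod (p ^ 2)) ∈ u.1 := by rw [← h]; exact hpw
    rw [hj] at this
    rcases mem_zpowers_sr.mp this with h1 | h1
    · exact rp_ne_one hp h1
    · exact absurd h1 (by simp)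
  have adj1 : (interGraph (DihedralGroup (p ^ 2))).Adj v (vD hp j) :=
    adj_iff.mpr ⟨hvw, inf_ne_bot (rp_ne_one hp) hpv hpw⟩
  have adj2 : (interGraph (DihedralGroup (p ^ 2))).Adj (vD hp j) u :=
    adj_iff.mpr ⟨hwu, inf_ne_bot (sr_ne_one j) (sr_mem_D hp j) hsru⟩
  exact ⟨.cons adj1 (.cons adj2 .nil), by simp⟩

lemma dist_le_two (v u : Vert (p ^ 2))
    (hv : zpowers (r ((p : ℕ) : ZMod (p ^ 2))) ≤ v.1) :
    (interGraph (DihedralGroup (p ^ 2))).dist v u ≤ 2 := by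
  obtain ⟨w, hw⟩ := walk_le_two hp v u hv
  exact (SimpleGraph.dist_le w).trans hw

lemma reachable (v u : Vert (p ^ 2))
    (hv : zpowers (r ((p : ℕ) : ZMod (p ^ 2))) ≤ v.1) :
    (interGraph (DihedralGroup (p ^ 2))).Reachable v u := by
  obtain ⟨w, _⟩ := walk_le_two hp v u hv
  exact ⟨w⟩

end Stmt10Aux
namespace Stmt10Aux

lemma exists_mid {V : Type*} {G : SimpleGraph V} {a b : V} (hab : G.dist a b = 2)
    (hr : G.Reachable a b) : ∃ c, G.Adj a c ∧ G.Adj c b := by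
  obtain ⟨w, hw⟩ := hr.exists_walk_length_eq_dist
  rw [hab] at hw
  cases w with
  | nil => simp at hw
  | cons h q =>
    cases q with
    | nil => simp at hw
    | cons h' q' =>
      have h0 : q'.length = 0 := by simpa using hw
      have hcb := SimpleGraph.Walk.eq_of_length_eq_zero h0
      subst hcb
      exact ⟨_, h, h'⟩

variable {p : ℕ} (hp : p.Prime)
include hp

lemma ecc_eq_two (v : Vert (p ^ 2))
    (hv : zpowers (r ((p : ℕ) : ZMod (p ^ 2))) ≤ v.1)
    (j : ZMod (p ^ 2)) (hj : sr j ∉ v.1) : ecc (p ^ 2) v = 2 := by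
  have hinf : v.1 ⊓ (vS hp j).1 = ⊥ := by
    rw [Subgroup.eq_bot_iff_forall]
    intro x hx
    have hx2 := (Subgroup.mem_inf.mp hx).2
    rcases mem_zpowers_sr.mp hx2 with h1 | h1
    · exact h1
    · exact absurd ((Subgroup.mem_inf.mp hx).1) (h1 ▸ hj)
  have hne : v ≠ vS hp j := by
    intro h
    exact hj (by rw [h]; exact mem_zpowers _)
  have hd2 : (interGraph (DihedralGroup (p ^ 2))).dist v (vS hp j) = 2 := by
    have hle := dist_le_two hp v (vS hp j) hv
    have hr := reachable hp v (vS hp j) hv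
    have hd0 : (interGraph (DihedralGroup (p ^ 2))).dist v (vS hp j) ≠ 0 :=
      fun h => hne (hr.dist_eq_zero_iff.mp h)
    have hd1 : (interGraph (DihedralGroup (p ^ 2))).dist v (vS hp j) ≠ 1 := by
      intro h
      exact (adj_iff.mp (SimpleGraph.dist_eq_one_iff_adj.mp h)).2 hinf
    omega
  unfold ecc
  apply le_antisymm
  · refine csSup_le ⟨_, Set.mem_range_self v⟩ ?_
    rintro b ⟨u, rfl⟩
    exact dist_le_two hp v u hv
  · exact le_csSup ⟨2, by rintro b ⟨u, rfl⟩; exact dist_le_two hp v u hv⟩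
      (Set.mem_range.mpr ⟨vS hp j, hd2⟩)

lemma ecc_eq_three (v : Vert (p ^ 2)) (i : ZMod (p ^ 2))
    (hv : v.1 = zpowers (sr i)) : ecc (p ^ 2) v = 3 := by
  haveI := hpsq hp
  have hsrv : sr i ∈ v.1 := hv ▸ mem_zpowers _
  have hvw : v ≠ vD hp i := by
    intro h
    have : r ((p : ℕ) : ZMod (p ^ 2)) ∈ v.1 := by
      rw [h]
      exact p_mem_A hp
    rw [hv] at this
    rcases mem_zpowers_sr.mp this with h1 | h1
    · exact rp_ne_one hp h1
    · exact absurd h1 (by simp)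
  have adj1 : (interGraph (DihedralGroup (p ^ 2))).Adj v (vD hp i) :=
    adj_iff.mpr ⟨hvw, inf_ne_bot (sr_ne_one i) hsrv (sr_mem_D hp i)⟩
  have hDv : zpowers (r ((p : ℕ) : ZMod (p ^ 2))) ≤ (vD hp i).1 :=
    zpowers_le.mpr (p_mem_A hp)
  have upper : ∀ u : Vert (p ^ 2), (interGraph (DihedralGroup (p ^ 2))).dist v u ≤ 3 := by
    intro u
    obtain ⟨w, hw⟩ := walk_le_two hp (vD hp i) u hDv
    have := SimpleGraph.dist_le (SimpleGraph.Walk.cons adj1 w)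
    simpa using this.trans (by simpa using Nat.add_le_add_right hw 1)
  -- the far vertex
  have h10 : (1 : ZMod (p ^ 2)) ≠ 0 := one_ne_zero' hp
  have hsne : sr (i + 1) ∉ zpowers (sr i) := by
    intro h
    rcases mem_zpowers_sr.mp h with h1 | h1
    · exact sr_ne_one _ h1
    · have : i + 1 = i := by injection h1
      simp at this
      exact h10 this
  have hne : v ≠ vS hp (i + 1) := by
    intro h
    have : sr (i + 1) ∈ v.1 := by rw [h]; exact mem_zpowers _
    rw [hv] at this
    exact hsne this
  have hinf : v.1 ⊓ (vS hp (i + 1)).1 = ⊥ := by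
    rw [Subgroup.eq_bot_iff_forall]
    intro x hx
    have hx2 := (Subgroup.mem_inf.mp hx).2
    rcases mem_zpowers_sr.mp hx2 with h1 | h1
    · exact h1
    · exact absurd ((hv ▸ (Subgroup.mem_inf.mp hx).1 : x ∈ zpowers (sr i))) (h1 ▸ hsne)
  have hreach : (interGraph (DihedralGroup (p ^ 2))).Reachable v (vS hp (i + 1)) := by
    obtain ⟨w, _⟩ := walk_le_two hp (vD hp i) (vS hp (i + 1)) hDv
    exact ⟨.cons adj1 w⟩
  have hd3 : (interGraph (DihedralGroup (p ^ 2))).dist v (vS hp (i + 1)) = 3 := by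
    have hle := upper (vS hp (i + 1))
    have hd0 : (interGraph (DihedralGroup (p ^ 2))).dist v (vS hp (i + 1)) ≠ 0 :=
      fun h => hne (hreach.dist_eq_zero_iff.mp h)
    have hd1 : (interGraph (DihedralGroup (p ^ 2))).dist v (vS hp (i + 1)) ≠ 1 :=
      fun h => (adj_iff.mp (SimpleGraph.dist_eq_one_iff_adj.mp h)).2 hinf
    have hd2 : (interGraph (DihedralGroup (p ^ 2))).dist v (vS hp (i + 1)) ≠ 2 := by
      intro h
      obtain ⟨m, hm1, hm2⟩ := exists_mid h hreach
      -- sr i ∈ m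
      obtain ⟨x, hx1, hxv, hxm⟩ := exists_ne_one_of_inf (adj_iff.mp hm1).2
      rw [hv] at hxv
      rcases mem_zpowers_sr.mp hxv with h1 | h1
      · exact hx1 h1
      subst h1
      obtain ⟨y, hy1, hym, hyu⟩ := exists_ne_one_of_inf (adj_iff.mp hm2).2
      rcases mem_zpowers_sr.mp hyu with h1 | h1
      · exact hy1 h1
      subst h1
      -- now sr i, sr (i+1) ∈ m.1, so r 1 ∈ m.1 and m = ⊤
      have hr1 : r (1 : ZMod (p ^ 2)) ∈ m.1 := by
        have := mul_mem hxm hym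
        rwa [sr_mul_sr, add_sub_cancel_left] at this
      have hall : ∀ a : ZMod (p ^ 2), r a ∈ m.1 := by
        intro a
        have h1 : (r (1 : ZMod (p ^ 2))) ^ a.val = r a := by
          rw [r_one_pow, ZMod.natCast_rightInverse a]
        exact h1 ▸ pow_mem hr1 a.val
      have htop : m.1 = ⊤ := by
        rw [Subgroup.eq_top_iff']
        rintro (⟨a⟩ | ⟨b⟩)
        · exact hall a
        · have h1 : sr i * r (b - i) = sr b := by
            rw [sr_mul_r]
            congr 1
            ring
          exact h1 ▸ mul_mem hxm (hall _)
      exact m.2.2 htop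
    omega
  unfold ecc
  apply le_antisymm
  · refine csSup_le ⟨_, Set.mem_range_self v⟩ ?_
    rintro b ⟨u, rfl⟩
    exact upper u
  · exact le_csSup ⟨3, by rintro b ⟨u, rfl⟩; exact upper u⟩
      (Set.mem_range.mpr ⟨vS hp (i + 1), hd3⟩)

end Stmt10Aux

open Stmt10Aux in
theorem stmt10 (p : ℕ) (hp : p.Prime) :
    (∀ v : Vert (p ^ 2),
      (v.1 = Subgroup.zpowers (DihedralGroup.r (1 : ZMod (p ^ 2))) ∨
        v.1 = Subgroup.zpowers (DihedralGroup.r ((p : ℕ) : ZMod (p ^ 2))) ∨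
        (∃ i : ZMod (p ^ 2), v.1 = Subgroup.closure
          {DihedralGroup.r ((p : ℕ) : ZMod (p ^ 2)), DihedralGroup.sr i})) →
        ecc (p ^ 2) v = 2) ∧
    (∀ v : Vert (p ^ 2),
      (∃ j : ZMod (p ^ 2), v.1 = Subgroup.zpowers (DihedralGroup.sr j)) →
        ecc (p ^ 2) v = 3) := by
  constructor
  · rintro v (hv | hv | ⟨i, hv⟩)
    · refine ecc_eq_two hp v ?_ 0 ?_
      · rw [hv, zpowers_le]
        exact ⟨(p : ℤ), by dsimp only; rw [Stmt10Aux.r_zpow]; congr 1; rw [zsmul_eq_mul, mul_one]; push_cast; ring⟩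
      · rw [hv]
        exact sr_not_mem_zpowers_r _ _
    · refine ecc_eq_two hp v (hv ▸ le_rfl) 0 ?_
      rw [hv]
      exact sr_not_mem_zpowers_r _ _
    · rw [closure_eq hp] at hv
      refine ecc_eq_two hp v ?_ (i + 1) ?_
      · rw [hv, zpowers_le]
        exact p_mem_A hp
      · rw [hv]
        show ¬(i + 1 - i ∈ A p)
        rw [add_sub_cancel_left]
        exact one_not_mem_A hp
  · rintro v ⟨j, hv⟩
    exact ecc_eq_three hp v j hv
end
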